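/- arXiv:2602.16789 — 8 statements merged into one kernel-verified Lean document; each statement's English description precedes it below -/
import Mathlib

section
/- If θ_F > θ_G and (θ_G−θ_F)/2 < ρ_{FG} < (θ_F−θ_G)/(2(τ*−1+1/τ*)), then |Ψ₁(t)| < |Ψ₁(τ*)| for all t ∈ [0,1] with t ≠ τ*. The same conclusion holds if θ_F < θ_G and (θ_F−θ_G)/(2(τ*−1+1/τ*)) < ρ_{FG} < (θ_G−θ_F)/2. -/
set_option maxHeartbeats 1000000

lemma psi1_aux (a ρ τ : ℝ) (hτ0 : 0 < τ) (hτ1 : τ < 1)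
    (ha : 0 < a) (hlo : -a < 2 * ρ) (hhi : 2 * ρ * (τ ^ 2 - τ + 1) < a * τ)
    (ψ : ℝ → ℝ)
    (hψ : ∀ t : ℝ, ψ t =
      if t < τ then t * (1 - τ) * a - 2 * t * τ * (1 - τ) * ρ
      else (1 - t) * τ * a + 2 * ((t - τ) / t) * τ * ρ - 2 * t * τ * (1 - τ) * ρ) :
    ∀ t ∈ Set.Icc (0 : ℝ) 1, t ≠ τ → |ψ t| < |ψ τ| := by
  have hτ0' : τ ≠ 0 := ne_of_gt hτ0
  have hψτ : ψ τ = τ * (1 - τ) * (a - 2 * τ * ρ) := by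
    rw [hψ, if_neg (lt_irrefl τ)]
    rw [show (τ - τ) / τ = 0 by simp]
    ring
  have hM : 0 < a - 2 * τ * ρ := by
    rcases le_or_gt ρ 0 with hρ | hρ
    · nlinarith [mul_nonneg hτ0.le (neg_nonneg.2 hρ)]
    · nlinarith [mul_pos hρ (sub_pos.2 hτ1)]
  have hMpos : 0 < ψ τ := by
    rw [hψτ]
    exact mul_pos (mul_pos hτ0 (by linarith)) hM
  intro t ht htne
  obtain ⟨ht0, ht1⟩ := ht
  rw [abs_of_pos hMpos, hψτ]
  rcases lt_or_ge t τ with hlt | hge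
  · rw [hψ, if_pos hlt]
    rw [show t * (1 - τ) * a - 2 * t * τ * (1 - τ) * ρ = t * (1 - τ) * (a - 2 * τ * ρ) by ring]
    rw [abs_of_nonneg (mul_nonneg (mul_nonneg ht0 (by linarith)) hM.le)]
    nlinarith [mul_pos (mul_pos (sub_pos.2 hlt) (show (0:ℝ) < 1 - τ by linarith)) hM]
  · have htτ : τ < t := lt_of_le_of_ne hge (Ne.symm htne)
    have ht0' : (0:ℝ) < t := lt_trans hτ0 htτ
    rw [hψ, if_neg (not_lt.2 hge)]
    have heq : (1 - t) * τ * a + 2 * ((t - τ) / t) * τ * ρ - 2 * t * τ * (1 - τ) * ρ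
        = ((1 - t) * τ * a * t + 2 * (t - τ) * τ * ρ - 2 * t * τ * (1 - τ) * ρ * t) / t := by
      field_simp
    rw [heq, abs_lt]
    have key1 : 0 < (t - τ) * (t * a + 2 * ρ * (t - t * τ - 1)) := by
      have hfac : 0 < t * a + 2 * ρ * (t - t * τ - 1) := by
        rcases le_or_gt ρ 0 with hρ | hρ
        · nlinarith [mul_pos ht0' ha,
            mul_nonneg (neg_nonneg.2 hρ)
              (show (0:ℝ) ≤ 1 - t + t * τ by nlinarith [mul_nonneg (sub_nonneg.2 ht1) (show (0:ℝ) ≤ 1 - τ by linarith)])]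
        · nlinarith [hhi, mul_pos (sub_pos.2 htτ)
            (show 0 < a + 2 * ρ * (1 - τ) by nlinarith [mul_pos hρ (sub_pos.2 hτ1)])]
      exact mul_pos (sub_pos.2 htτ) hfac
    have key2 : 0 < t * (2 - τ - t) * a + 2 * ρ * ((t - τ) - t * (1 - τ) * (τ + t)) := by
      rcases le_or_gt 0 ((t - τ) - t * (1 - τ) * (τ + t)) with hQ | hQ
      · have hpos : 0 < t * (1 - τ ^ 2) + τ * (1 - t ^ 2) := by
          nlinarith [mul_pos ht0' (show (0:ℝ) < 1 - τ ^ 2 by nlinarith),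
            mul_nonneg hτ0.le (show (0:ℝ) ≤ 1 - t ^ 2 by nlinarith)]
        nlinarith [mul_nonneg (show (0:ℝ) ≤ a + 2 * ρ by linarith) hQ, mul_pos ha hpos]
      · rcases le_or_gt ρ 0 with hρ | hρ
        · nlinarith [mul_nonneg (neg_nonneg.2 hρ) (neg_nonneg.2 hQ.le),
            mul_pos (mul_pos ht0' (show (0:ℝ) < 2 - τ - t by linarith)) ha]
        · have hD : (0:ℝ) < τ ^ 2 - τ + 1 := by nlinarith [sq_nonneg (τ - 1)]
          have hG : 0 < t * (2 - τ - t) * (τ ^ 2 - τ + 1) + τ * ((t - τ) - t * (1 - τ) * (τ + t)) := by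
            have e1 : t - τ ≤ t * (1 - τ) := by nlinarith [mul_nonneg hτ0.le (sub_nonneg.2 ht1)]
            have e2 : (t - τ) * (t - τ) ≤ (t * (1 - τ)) * (t * (1 - τ)) :=
              mul_self_le_mul_self (sub_nonneg.2 htτ.le) e1
            have e3 : (0:ℝ) ≤ (1 - t) * t * ((1 - τ) * (1 - τ)) :=
              mul_nonneg (mul_nonneg (sub_nonneg.2 ht1) ht0'.le)
                (mul_nonneg (by linarith) (by linarith))
            have e4 : 0 < t * ((1 - τ) * (1 - τ)) :=
              mul_pos ht0' (mul_pos (sub_pos.2 hτ1) (sub_pos.2 hτ1))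
            nlinarith [e2, e3, e4]
          nlinarith [mul_pos ha hG,
            mul_pos (show 0 < a * τ - 2 * ρ * (τ ^ 2 - τ + 1) by linarith)
              (show 0 < -((t - τ) - t * (1 - τ) * (τ + t)) by linarith), hD]
    constructor
    · rw [lt_div_iff₀ ht0']
      nlinarith [mul_pos hτ0 key2]
    · rw [div_lt_iff₀ ht0']
      nlinarith [mul_pos hτ0 key1]

/-- Proposition: maximal point of `Ψ₁` is at `τ*` under the stated eccentricity bounds. -/
theorem psi1_max_at_change_point
    (θF θG ρ τ : ℝ) (hτ : τ ∈ Set.Ioo (0 : ℝ) 1)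
    (Ψ₁ : ℝ → ℝ)
    (hΨ₁ : ∀ t : ℝ, Ψ₁ t =
      if t < τ then t * (1 - τ) * (θF - θG) - 2 * t * τ * (1 - τ) * ρ
      else (1 - t) * τ * (θF - θG) + 2 * ((t - τ) / t) * τ * ρ - 2 * t * τ * (1 - τ) * ρ)
    (hcase :
      (θG < θF ∧ (θG - θF) / 2 < ρ ∧ ρ < (θF - θG) / (2 * (τ - 1 + 1 / τ)))
      ∨ (θF < θG ∧ (θF - θG) / (2 * (τ - 1 + 1 / τ)) < ρ ∧ ρ < (θG - θF) / 2)) :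
    ∀ t ∈ Set.Icc (0 : ℝ) 1, t ≠ τ → |Ψ₁ t| < |Ψ₁ τ| := by
  obtain ⟨hτ0, hτ1⟩ := hτ
  have hτ0' : τ ≠ 0 := ne_of_gt hτ0
  have hK : 0 < τ - 1 + 1 / τ := by
    rw [show τ - 1 + 1 / τ = (τ ^ 2 - τ + 1) / τ by field_simp]
    exact div_pos (by nlinarith [sq_nonneg (τ - 1)]) hτ0
  rcases hcase with ⟨h1, h2, h3⟩ | ⟨h1, h2, h3⟩
  · have hhi : 2 * ρ * (τ ^ 2 - τ + 1) < (θF - θG) * τ := by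
      have h3' : 2 * (τ - 1 + 1 / τ) * ρ < θF - θG := by
        rw [lt_div_iff₀ (by linarith : 0 < 2 * (τ - 1 + 1 / τ))] at h3
        linarith
      have := mul_lt_mul_of_pos_right h3' hτ0
      calc 2 * ρ * (τ ^ 2 - τ + 1) = 2 * (τ - 1 + 1 / τ) * ρ * τ := by field_simp
        _ < (θF - θG) * τ := this
    exact psi1_aux (θF - θG) ρ τ hτ0 hτ1 (by linarith) (by linarith) hhi Ψ₁ hΨ₁
  · have hhi : 2 * (-ρ) * (τ ^ 2 - τ + 1) < (θG - θF) * τ := by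
      have h2' : θF - θG < 2 * (τ - 1 + 1 / τ) * ρ := by
        rw [div_lt_iff₀ (by linarith : 0 < 2 * (τ - 1 + 1 / τ))] at h2
        linarith
      have := mul_lt_mul_of_pos_right h2' hτ0
      calc 2 * (-ρ) * (τ ^ 2 - τ + 1) = -(2 * (τ - 1 + 1 / τ) * ρ * τ) := by field_simp
        _ < (θG - θF) * τ := by
          have heq : 2 * (τ - 1 + 1 / τ) * ρ * τ = 2 * ρ * (τ ^ 2 - τ + 1) := by field_simp
          nlinarith [this]
    have haux := psi1_aux (θG - θF) (-ρ) τ hτ0 hτ1 (by linarith) (by linarith) hhi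
      (fun t => -Ψ₁ t) (by
        intro t
        show -Ψ₁ t = _
        rw [hΨ₁ t]
        split_ifs <;> ring)
    intro t ht htne
    have := haux t ht htne
    simpa using this
end

section
/- If θ_F ≠ θ_G and |ρ_{FG}| ≤ (1/2)·min{τ*/(1−τ*), (1−τ*)/τ*}·|θ_F−θ_G|, then |Ψ₂(t)| < |Ψ₂(τ*)| for all t ∈ [0,1] with t ≠ τ*. -/
/-- Key polynomial inequality after clearing denominators. -/
lemma psi2_aux (t τ A R d : ℝ) (ht0 : 0 ≤ t) (h : t < τ) (hτ1 : τ < 1)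
    (hA : 0 < A) (hR : 0 ≤ R) (hρ2 : 2 * τ * R ≤ (1 - τ) * A)
    (hde : d * (1 - t) = t * (τ - t)) : t * A + 2 * d * R < τ * A := by
  have h1t : 0 < 1 - t := by linarith
  have hτ0 : 0 < τ := lt_of_le_of_lt ht0 h
  rw [← mul_lt_mul_iff_of_pos_right (mul_pos hτ0 h1t)]
  have e1 : (t * A + 2 * d * R) * (τ * (1 - t))
      = t * τ * (1 - t) * A + 2 * (t * (τ - t)) * (τ * R) := by
    rw [← hde]; ring
  rw [e1]
  have htt : 0 ≤ t * (τ - t) := mul_nonneg ht0 (by linarith)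
  have h2 : 2 * (t * (τ - t)) * (τ * R) ≤ (t * (τ - t)) * ((1 - τ) * A) := by
    nlinarith [mul_le_mul_of_nonneg_left hρ2 htt]
  nlinarith [mul_pos (pow_pos (sub_pos.2 h) 2) hA]

/-- Proposition: maximal point of `Ψ₂` is at `τ*` under the stated eccentricity bound. -/
theorem psi2_max_at_change_point
    (θF θG ρ τ : ℝ) (hτ : τ ∈ Set.Ioo (0 : ℝ) 1)
    (Ψ₂ : ℝ → ℝ)
    (hΨ₂ : ∀ t : ℝ, Ψ₂ t =
      if t < τ then t * (1 - τ) * (θF - θG) - 2 * (t * (τ - t) / (1 - t)) * (1 - τ) * ρ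
      else (1 - t) * τ * (θF - θG) + 2 * ((t - τ) / t) * τ * ρ - 2 * (t - τ) * τ * ρ)
    (hne : θF ≠ θG)
    (hρ : |ρ| ≤ (1 / 2) * min (τ / (1 - τ)) ((1 - τ) / τ) * |θF - θG|) :
    ∀ t ∈ Set.Icc (0 : ℝ) 1, t ≠ τ → |Ψ₂ t| < |Ψ₂ τ| := by
  obtain ⟨hτ0, hτ1⟩ := hτ
  have h1τ : 0 < 1 - τ := by linarith
  set A := |θF - θG| with hA_def
  set R := |ρ| with hR_def
  have hA : 0 < A := abs_pos.2 (sub_ne_zero.2 hne)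
  have hR : 0 ≤ R := abs_nonneg ρ
  -- extract the two denominator-free bounds on R
  have hρ1 : 2 * (1 - τ) * R ≤ τ * A := by
    have h1 : R ≤ (1 / 2) * (τ / (1 - τ)) * A := by
      refine le_trans hρ ?_
      gcongr
      exact min_le_left _ _
    have h3 : 2 * (1 - τ) * ((1 / 2) * (τ / (1 - τ)) * A) = τ * A := by
      field_simp
    nlinarith [mul_le_mul_of_nonneg_left h1 (show (0:ℝ) ≤ 2 * (1 - τ) by linarith)]
  have hρ2 : 2 * τ * R ≤ (1 - τ) * A := by
    have h1 : R ≤ (1 / 2) * ((1 - τ) / τ) * A := by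
      refine le_trans hρ ?_
      gcongr
      exact min_le_right _ _
    have h3 : 2 * τ * ((1 / 2) * ((1 - τ) / τ) * A) = (1 - τ) * A := by
      field_simp
    nlinarith [mul_le_mul_of_nonneg_left h1 (show (0:ℝ) ≤ 2 * τ by linarith)]
  -- value at τ
  have hτval : Ψ₂ τ = (1 - τ) * τ * (θF - θG) := by
    rw [hΨ₂ τ, if_neg (lt_irrefl τ)]
    simp
  have habsτ : |Ψ₂ τ| = (1 - τ) * τ * A := by
    rw [hτval, abs_mul, abs_mul, abs_of_pos h1τ, abs_of_pos hτ0]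
  intro t ht htne
  obtain ⟨ht0, ht1⟩ := ht
  rw [habsτ]
  rcases lt_trichotomy t τ with h | h | h
  · -- case t < τ
    have h1t : 0 < 1 - t := by linarith
    set d := t * (τ - t) / (1 - t) with hd_def
    have hde : d * (1 - t) = t * (τ - t) := div_mul_cancel₀ _ h1t.ne'
    have hd0 : 0 ≤ d := div_nonneg (mul_nonneg ht0 (by linarith)) h1t.le
    have hval : Ψ₂ t = t * (1 - τ) * (θF - θG) - 2 * d * (1 - τ) * ρ := by
      rw [hΨ₂ t, if_pos h]
    have key : t * A + 2 * d * R < τ * A :=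
      psi2_aux t τ A R d ht0 h hτ1 hA hR hρ2 hde
    calc |Ψ₂ t| ≤ |t * (1 - τ) * (θF - θG)| + |2 * d * (1 - τ) * ρ| := by
          rw [hval]; exact abs_sub _ _
      _ = t * (1 - τ) * A + 2 * d * (1 - τ) * R := by
          rw [abs_mul, abs_mul, abs_mul, abs_mul, abs_mul,
            abs_of_nonneg ht0, abs_of_pos h1τ, abs_of_nonneg hd0,
            abs_of_nonneg (show (0:ℝ) ≤ 2 by norm_num)]
      _ < (1 - τ) * τ * A := by nlinarith [key]
  · exact absurd h htne
  · -- case τ < t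
    have ht0' : 0 < t := lt_trans hτ0 h
    set d := (t - τ) * (1 - t) / t with hd_def
    have hde : d * (1 - (1 - t)) = (1 - t) * ((1 - τ) - (1 - t)) := by
      have : d * t = (t - τ) * (1 - t) := div_mul_cancel₀ _ ht0'.ne'
      rw [show (1 - (1 - t)) = t by ring, this]; ring
    have hd0 : 0 ≤ d := div_nonneg (mul_nonneg (by linarith) (by linarith)) ht0'.le
    have hval : Ψ₂ t = (1 - t) * τ * (θF - θG) + 2 * d * τ * ρ := by
      rw [hΨ₂ t, if_neg (not_lt.2 h.le), hd_def]
      field_simp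
      ring
    have key : (1 - t) * A + 2 * d * R < (1 - τ) * A :=
      psi2_aux (1 - t) (1 - τ) A R d (by linarith) (by linarith) (by linarith)
        hA hR (by linarith) hde
    calc |Ψ₂ t| ≤ |(1 - t) * τ * (θF - θG)| + |2 * d * τ * ρ| := by
          rw [hval]; exact abs_add_le _ _
      _ = (1 - t) * τ * A + 2 * d * τ * R := by
          rw [abs_mul, abs_mul, abs_mul, abs_mul, abs_mul,
            abs_of_nonneg (show (0:ℝ) ≤ 1 - t by linarith), abs_of_pos hτ0,
            abs_of_nonneg hd0, abs_of_nonneg (show (0:ℝ) ≤ 2 by norm_num)]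
      _ < (1 - τ) * τ * A := by nlinarith [key]
end

section
/- For all t ∈ [0,1], Ψ₂(t) − Ψ₁(t) = 2·(t²(1−τ*)²/(1−t))·ρ_{FG} for t < τ*, and Ψ₂(t) − Ψ₁(t) = 2(1−t)(τ*)²·ρ_{FG} for t ≥ τ*. In particular, for every t ∈ (0,1) with t ≠ τ* (and also t = τ*), Ψ₂(t) − Ψ₁(t) has the same sign as ρ_{FG} (it is positive if ρ_{FG} > 0, zero if ρ_{FG} = 0, negative if ρ_{FG} < 0). -/
/-!
On `t < τ` the two functions differ only in the `ρ`-term, and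
`(1 - t) τ - (τ - t) = t (1 - τ)` turns `2 ρ (1 - τ) t (τ - (τ - t) / (1 - t))` into
`2 ρ t² (1 - τ)² / (1 - t)`; on `t ≥ τ` the difference `2 τ ρ (t (1 - τ) - (t - τ))` is
`2 (1 - t) τ² ρ`. In both cases `Ψ₂ - Ψ₁` is `ρ` times a coefficient that is positive for
`t ∈ (0, 1)`, which gives the sign.
-/

namespace PsiGap

noncomputable def psi₁ (θF θG ρ τ t : ℝ) : ℝ :=
  if t < τ then t * (1 - τ) * (θF - θG) - 2 * t * τ * (1 - τ) * ρ
  else (1 - t) * τ * (θF - θG) + 2 * ((t - τ) / t) * τ * ρ - 2 * t * τ * (1 - τ) * ρ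

noncomputable def psi₂ (θF θG ρ τ t : ℝ) : ℝ :=
  if t < τ then t * (1 - τ) * (θF - θG) - 2 * (t * (τ - t) / (1 - t)) * (1 - τ) * ρ
  else (1 - t) * τ * (θF - θG) + 2 * ((t - τ) / t) * τ * ρ - 2 * (t - τ) * τ * ρ

noncomputable def gapCoeff (τ t : ℝ) : ℝ :=
  if t < τ then 2 * (t ^ 2 * (1 - τ) ^ 2 / (1 - t)) else 2 * (1 - t) * τ ^ 2

theorem psi₂_sub_psi₁ (θF θG ρ : ℝ) {τ : ℝ} (hτ : τ ≤ 1) (t : ℝ) :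
    psi₂ θF θG ρ τ t - psi₁ θF θG ρ τ t = PsiGap.gapCoeff τ t * ρ := by
  unfold psi₁ psi₂ gapCoeff
  split_ifs with htτ
  · have h1t : 1 - t ≠ 0 := by linarith
    field_simp
    ring
  · ring

theorem gapCoeff_pos {τ t : ℝ} (hτ₀ : τ ≠ 0) (hτ₁ : τ ≠ 1) (ht : t ∈ Set.Ioo (0 : ℝ) 1) :
    0 < gapCoeff τ t := by
  obtain ⟨ht₀, ht₁⟩ := ht
  have h1t : 0 < 1 - t := by linarith
  have h1τ : 1 - τ ≠ 0 := sub_ne_zero.mpr hτ₁.symm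
  unfold gapCoeff
  split_ifs <;> positivity

end PsiGap

/-- The difference of the two limit functions `Ψ₂ - Ψ₁` and its sign, determined by the
eccentricity `ρ`. -/
theorem psi2_sub_psi1
    (θF θG ρ τ : ℝ) (hτ : τ ∈ Set.Ioo (0 : ℝ) 1)
    (Ψ₁ Ψ₂ : ℝ → ℝ)
    (hΨ₁ : ∀ t : ℝ, Ψ₁ t =
      if t < τ then t * (1 - τ) * (θF - θG) - 2 * t * τ * (1 - τ) * ρ
      else (1 - t) * τ * (θF - θG) + 2 * ((t - τ) / t) * τ * ρ - 2 * t * τ * (1 - τ) * ρ)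
    (hΨ₂ : ∀ t : ℝ, Ψ₂ t =
      if t < τ then t * (1 - τ) * (θF - θG) - 2 * (t * (τ - t) / (1 - t)) * (1 - τ) * ρ
      else (1 - t) * τ * (θF - θG) + 2 * ((t - τ) / t) * τ * ρ - 2 * (t - τ) * τ * ρ) :
    (∀ t ∈ Set.Icc (0 : ℝ) 1,
      Ψ₂ t - Ψ₁ t =
        if t < τ then 2 * (t ^ 2 * (1 - τ) ^ 2 / (1 - t)) * ρ
        else 2 * (1 - t) * τ ^ 2 * ρ)
    ∧ (∀ t ∈ Set.Ioo (0 : ℝ) 1,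
        (0 < ρ → 0 < Ψ₂ t - Ψ₁ t)
        ∧ (ρ = 0 → Ψ₂ t - Ψ₁ t = 0)
        ∧ (ρ < 0 → Ψ₂ t - Ψ₁ t < 0)) := by
  have hgap (t : ℝ) : Ψ₂ t - Ψ₁ t = PsiGap.gapCoeff τ t * ρ := by
    rw [hΨ₁, hΨ₂]
    exact PsiGap.psi₂_sub_psi₁ θF θG ρ hτ.2.le t
  refine ⟨fun t _ => (hgap t).trans (ite_mul ..), fun t ht => ?_⟩
  have hc := PsiGap.gapCoeff_pos hτ.1.ne' hτ.2.ne ht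
  rw [hgap t]
  exact ⟨mul_pos hc, fun hρ => by rw [hρ, mul_zero], mul_neg_of_pos_of_neg hc⟩
end

section
/- Let h : ℝ^p × ℝ^p → ℝ be a measurable symmetric kernel. Suppose that for all probability measures F and G on ℝ^p such that h is integrable with respect to F⊗F, G⊗G and F⊗G, one has ∬ h(x,y) dF(x)dG(y) = (1/2)(∬ h(x,y) dF(x)dF(y) + ∬ h(x,y) dG(x)dG(y)). Then h(x,y) = (h(x,x) + h(y,y))/2 for all x, y ∈ ℝ^p, and consequently for every n ≥ 2 and all x₁,…,x_n ∈ ℝ^p, (2/(n(n−1))) ∑_{1≤i<j≤n} h(x_i,x_j) = (1/n) ∑_{i=1}^n h(x_i,x_i). -/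
open MeasureTheory Finset

theorem aux_pair_sum (n : ℕ) (d : ℕ → ℝ) :
    ∑ i ∈ Finset.Icc 1 n, ∑ j ∈ Finset.Ioc i n, (d i + d j)
      = ((n : ℝ) - 1) * ∑ i ∈ Finset.Icc 1 n, d i := by
  induction n with
  | zero => simp
  | succ n ih =>
    have hIcc : Finset.Icc 1 (n+1) = insert (n+1) (Finset.Icc 1 n) := by
      ext k; simp only [Finset.mem_Icc, Finset.mem_insert]; omega
    have hnmem : (n+1) ∉ Finset.Icc 1 n := by simp
    have hstep : ∑ i ∈ Finset.Icc 1 n, ∑ j ∈ Finset.Ioc i (n+1), (d i + d j)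
        = (∑ i ∈ Finset.Icc 1 n, ∑ j ∈ Finset.Ioc i n, (d i + d j))
          + ∑ i ∈ Finset.Icc 1 n, (d i + d (n+1)) := by
      rw [← Finset.sum_add_distrib]
      refine Finset.sum_congr rfl fun i hi => ?_
      have hIoc : Finset.Ioc i (n+1) = insert (n+1) (Finset.Ioc i n) := by
        ext k; simp only [Finset.mem_Ioc, Finset.mem_insert]
        simp only [Finset.mem_Icc] at hi; omega
      rw [hIoc, Finset.sum_insert (by simp)]
      ring
    rw [hIcc, Finset.sum_insert hnmem, Finset.sum_insert hnmem, hstep, ih]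
    simp only [Finset.Ioc_self, Finset.sum_empty]
    rw [Finset.sum_add_distrib, Finset.sum_const, Nat.card_Icc, nsmul_eq_mul]
    push_cast
    ring

/-- Lemma: if the eccentricity `ρ_{FG}` vanishes for all distributions `F`, `G` for which the
relevant expectations exist, then the kernel is linear, `h(x,y) = (h(x,x)+h(y,y))/2`, and the
corresponding U-statistic is a linear statistic. -/
theorem kernel_linear_of_eccentricity_zero
    (p : ℕ) (h : (Fin p → ℝ) → (Fin p → ℝ) → ℝ)
    (hmeas : Measurable (Function.uncurry h))
    (hsymm : ∀ x y, h x y = h y x)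
    (hyp : ∀ F G : Measure (Fin p → ℝ), IsProbabilityMeasure F → IsProbabilityMeasure G →
      Integrable (Function.uncurry h) (F.prod F) →
      Integrable (Function.uncurry h) (G.prod G) →
      Integrable (Function.uncurry h) (F.prod G) →
      (∫ x, ∫ y, h x y ∂G ∂F)
        = (1 / 2) * ((∫ x, ∫ y, h x y ∂F ∂F) + ∫ x, ∫ y, h x y ∂G ∂G)) :
    (∀ x y : Fin p → ℝ, h x y = (h x x + h y y) / 2)
    ∧ ∀ n : ℕ, 2 ≤ n → ∀ x : ℕ → (Fin p → ℝ),
        (2 / ((n : ℝ) * ((n : ℝ) - 1))) *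
            ∑ i ∈ Finset.Icc 1 n, ∑ j ∈ Finset.Ioc i n, h (x i) (x j)
          = (1 / (n : ℝ)) * ∑ i ∈ Finset.Icc 1 n, h (x i) (x i) := by
  have hint : ∀ a : (Fin p → ℝ) × (Fin p → ℝ),
      Integrable (Function.uncurry h) (Measure.dirac a) := by
    intro a
    refine (integrable_const (Function.uncurry h a)).congr ?_
    rw [ae_dirac_eq]
    exact Filter.eventually_pure.2 rfl
  have hintp : ∀ a b : (Fin p → ℝ),
      Integrable (Function.uncurry h) ((Measure.dirac a).prod (Measure.dirac b)) := by
    intro a b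
    rw [Measure.dirac_prod_dirac]
    exact hint _
  have key : ∀ x y : Fin p → ℝ, h x y = (h x x + h y y) / 2 := by
    intro x y
    have := hyp (Measure.dirac x) (Measure.dirac y) inferInstance inferInstance
      (hintp x x) (hintp y y) (hintp x y)
    simp only [integral_dirac] at this
    linarith
  refine ⟨key, fun n hn x => ?_⟩
  have hsum : ∑ i ∈ Finset.Icc 1 n, ∑ j ∈ Finset.Ioc i n, h (x i) (x j)
      = (1/2) * ∑ i ∈ Finset.Icc 1 n, ∑ j ∈ Finset.Ioc i n,
          (h (x i) (x i) + h (x j) (x j)) := by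
    rw [Finset.mul_sum]
    refine Finset.sum_congr rfl fun i _ => ?_
    rw [Finset.mul_sum]
    exact Finset.sum_congr rfl fun j _ => by rw [key]; ring
  rw [hsum, aux_pair_sum n (fun i => h (x i) (x i))]
  have hn0 : (n : ℝ) ≠ 0 := by positivity
  have hn1 : (n : ℝ) - 1 ≠ 0 := by
    have : (2 : ℝ) ≤ n := by exact_mod_cast hn
    linarith
  field_simp
end

section
/- Suppose there exist ε > 0 and a measurable function v : ℝ → ℝ such that |p_λ(x)| + |∂p_λ(x)/∂λ| ≤ v(x) for all λ ∈ (λ₀−ε, λ₀+ε) and almost every x, and ∬ |h(x,y)| v(x)v(y) dx dy < ∞. Set f(x) = p_{λ₀}(x) and g_n(x) = p_{λ₀+a/√n}(x), θ_F = ∬ h(x,y) f(x)f(y) dx dy, θ_{G_n} = ∬ h(x,y) g_n(x)g_n(y) dx dy, θ_{FG_n} = ∬ h(x,y) f(x)g_n(y) dx dy, ρ_{FG_n} = θ_{FG_n} − (θ_F + θ_{G_n})/2. Then √n(θ_F − θ_{G_n}) → Δ := −2a ∬ h(x,y) (∂p_λ(x)/∂λ)|_{λ=λ₀} p_{λ₀}(y)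 dx dy and √n ρ_{FG_n} → 0 as n → ∞. -/
open MeasureTheory Filter

/-- Proposition: for a differentiable one-parameter family of densities with a dominating
function, the sequence of local alternatives `g_n = p_{l₀ + a/√n}` satisfies
`√n (θ_F - θ_{G_n}) → Δ` and `√n ρ_{F G_n} → 0`. -/
theorem local_alternatives_from_densities
    (h : ℝ → ℝ → ℝ) (hmeas : Measurable (Function.uncurry h))
    (hsymm : ∀ x y, h x y = h y x)
    (Λ : Set ℝ) (hΛ : Λ.OrdConnected)
    (p p' : ℝ → ℝ → ℝ)
    (hpmeas : ∀ l, Measurable (p l))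
    (hdens : ∀ l ∈ Λ, (∀ x, 0 ≤ p l x) ∧ (∫ x : ℝ, p l x) = 1)
    (l₀ : ℝ) (hl₀ : l₀ ∈ interior Λ) (a : ℝ)
    (ε : ℝ) (hε : 0 < ε)
    (hderiv : ∀ᵐ x : ℝ, ∀ l ∈ Set.Ioo (l₀ - ε) (l₀ + ε),
      HasDerivAt (fun l' => p l' x) (p' l x) l)
    (v : ℝ → ℝ) (hv : Measurable v)
    (hbound : ∀ᵐ x : ℝ, ∀ l ∈ Set.Ioo (l₀ - ε) (l₀ + ε), |p l x| + |p' l x| ≤ v x)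
    (hint : Integrable (fun z : ℝ × ℝ => |h z.1 z.2| * v z.1 * v z.2)
      (volume : Measure (ℝ × ℝ)))
    (f : ℝ → ℝ) (g : ℕ → ℝ → ℝ)
    (hf : f = p l₀) (hg : ∀ n : ℕ, g n = p (l₀ + a / Real.sqrt n))
    (θF : ℝ) (θG θFG ρ : ℕ → ℝ)
    (hθF : θF = ∫ x : ℝ, ∫ y : ℝ, h x y * f x * f y)
    (hθG : ∀ n, θG n = ∫ x : ℝ, ∫ y : ℝ, h x y * g n x * g n y)
    (hθFG : ∀ n, θFG n = ∫ x : ℝ, ∫ y : ℝ, h x y * f x * g n y)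
    (hρ : ∀ n, ρ n = θFG n - (θF + θG n) / 2)
    (Δ : ℝ) (hΔ : Δ = -2 * a * ∫ x : ℝ, ∫ y : ℝ, h x y * p' l₀ x * p l₀ y) :
    Tendsto (fun n : ℕ => Real.sqrt n * (θF - θG n)) atTop (nhds Δ)
    ∧ Tendsto (fun n : ℕ => Real.sqrt n * ρ n) atTop (nhds 0) := by
  subst hf
  have hl₀Ioo : l₀ ∈ Set.Ioo (l₀ - ε) (l₀ + ε) := ⟨by linarith, by linarith⟩
  -- the sequence of parameters
  set L : ℕ → ℝ := fun n => l₀ + a / Real.sqrt n with hL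
  have hLmem : ∀ n, L n = l₀ + a / Real.sqrt n := fun n => rfl
  -- √n → ∞
  have hsqrt : Tendsto (fun n : ℕ => Real.sqrt n) atTop atTop := by
    refine tendsto_atTop_atTop.2 fun b => ⟨⌈b⌉₊ ^ 2, fun n hn => ?_⟩
    have h1 : (b : ℝ) ≤ (⌈b⌉₊ : ℝ) := Nat.le_ceil b
    have h2 : ((⌈b⌉₊ ^ 2 : ℕ) : ℝ) ≤ (n : ℝ) := by exact_mod_cast hn
    have h3 : Real.sqrt ((⌈b⌉₊ ^ 2 : ℕ) : ℝ) ≤ Real.sqrt n := Real.sqrt_le_sqrt h2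
    have h4 : Real.sqrt ((⌈b⌉₊ ^ 2 : ℕ) : ℝ) = (⌈b⌉₊ : ℝ) := by
      push_cast
      exact Real.sqrt_sq (Nat.cast_nonneg _)
    linarith
  have hδ0 : Tendsto (fun n : ℕ => a / Real.sqrt n) atTop (nhds 0) :=
    Tendsto.div_atTop tendsto_const_nhds hsqrt
  have hLt : Tendsto L atTop (nhds l₀) := by
    have h1 : Tendsto (fun n : ℕ => l₀ + a / Real.sqrt n) atTop (nhds (l₀ + 0)) :=
      (tendsto_const_nhds : Tendsto (fun _ : ℕ => l₀) atTop (nhds l₀)).add hδ0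
    simpa using h1
  have hev : ∀ᶠ n in atTop, L n ∈ Set.Ioo (l₀ - ε) (l₀ + ε) :=
    hLt.eventually (isOpen_Ioo.mem_nhds hl₀Ioo)
  have hn1 : ∀ᶠ n : ℕ in atTop, 1 ≤ n := eventually_ge_atTop 1
  have hsne : ∀ n : ℕ, 1 ≤ n → Real.sqrt n ≠ 0 := by
    intro n hn
    have : (0 : ℝ) < Real.sqrt n := Real.sqrt_pos.2 (by exact_mod_cast hn)
    exact ne_of_gt this
  -- master a.e. statement on ℝ
  have hmaster : ∀ᵐ x : ℝ,
      0 ≤ v x ∧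
      (∀ l ∈ Set.Ioo (l₀ - ε) (l₀ + ε),
        |p l x| ≤ v x ∧ |p' l x| ≤ v x ∧ |p l x - p l₀ x| ≤ v x * |l - l₀|) ∧
      Tendsto (fun n : ℕ => Real.sqrt n * (p l₀ x - p (L n) x)) atTop
        (nhds (-(a * p' l₀ x))) ∧
      Tendsto (fun n : ℕ => p (L n) x) atTop (nhds (p l₀ x)) := by
    filter_upwards [hderiv, hbound] with x Hd Hb
    have hv0 : 0 ≤ v x :=
      le_trans (by positivity) (Hb l₀ hl₀Ioo)
    have habs : ∀ l ∈ Set.Ioo (l₀ - ε) (l₀ + ε), |p l x| ≤ v x := fun l hl =>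
      le_trans (le_add_of_nonneg_right (abs_nonneg _)) (Hb l hl)
    have habs' : ∀ l ∈ Set.Ioo (l₀ - ε) (l₀ + ε), |p' l x| ≤ v x := fun l hl =>
      le_trans (le_add_of_nonneg_left (abs_nonneg _)) (Hb l hl)
    have hlip : ∀ l ∈ Set.Ioo (l₀ - ε) (l₀ + ε), |p l x - p l₀ x| ≤ v x * |l - l₀| := by
      intro l hl
      have := Convex.norm_image_sub_le_of_norm_hasDerivWithin_le
        (f := fun t => p t x) (f' := fun t => p' t x) (C := v x)
        (fun t ht => (Hd t ht).hasDerivWithinAt) (fun t ht => habs' t ht)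
        (convex_Ioo _ _) hl₀Ioo hl
      simpa [Real.norm_eq_abs] using this
    refine ⟨hv0, fun l hl => ⟨habs l hl, habs' l hl, hlip l hl⟩, ?_, ?_⟩
    · -- √n (p l₀ x - p (L n) x) → -(a p' l₀ x)
      rcases eq_or_ne a 0 with ha | ha
      · have : (fun n : ℕ => Real.sqrt n * (p l₀ x - p (L n) x)) = fun _ => 0 := by
          funext n; simp [hLmem, ha]
        rw [this, ha]
        simpa using tendsto_const_nhds
      · have hslope := hasDerivAt_iff_tendsto_slope.mp (Hd l₀ hl₀Ioo)
        have hLne : Tendsto L atTop (nhdsWithin l₀ {l₀}ᶜ) := by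
          refine tendsto_nhdsWithin_iff.2 ⟨hLt, ?_⟩
          filter_upwards [hn1] with n hn
          simp only [hLmem, Set.mem_compl_iff, Set.mem_singleton_iff]
          intro hcon
          have : a / Real.sqrt n = 0 := by linarith [hcon]
          exact (div_ne_zero ha (hsne n hn)) this
        have hcomp := hslope.comp hLne
        have := hcomp.const_mul (-a)
        refine Tendsto.congr' ?_ (by simpa only [neg_mul, Function.comp_def] using this)
        filter_upwards [hn1] with n hn
        have hs0 : Real.sqrt n ≠ 0 := hsne n hn
        have : slope (fun t => p t x) l₀ (L n) =
            (p (L n) x - p l₀ x) / (a / Real.sqrt n) := by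
          rw [slope_def_field]
          congr 1
          simp [hLmem]
        show -(a * slope (fun l' => p l' x) l₀ (L n)) = Real.sqrt n * (p l₀ x - p (L n) x)
        rw [this]
        field_simp
        ring
    · -- p (L n) x → p l₀ x
      have h0 : Tendsto (fun n : ℕ => p (L n) x - p l₀ x) atTop (nhds 0) := by
        refine squeeze_zero_norm' (a := fun n : ℕ => v x * |L n - l₀|) ?_ ?_
        · filter_upwards [hev] with n hn
          simpa [Real.norm_eq_abs] using hlip (L n) hn
        · have h1 : Tendsto (fun n : ℕ => |L n - l₀|) atTop (nhds |(0 : ℝ)|) := by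
            have h2 := (hLt.sub_const l₀).abs
            simpa using h2
          have h2 := h1.const_mul (v x)
          simpa using h2
      have := h0.add_const (p l₀ x)
      simpa using this
  have hv0ae : ∀ᵐ x : ℝ, 0 ≤ v x := hmaster.mono fun x hx => hx.1
  -- lift a.e. statements to the product
  have prodae : ∀ (P : ℝ → Prop), (∀ᵐ x : ℝ, P x) →
      (∀ᵐ z : ℝ × ℝ, P z.1 ∧ P z.2) := by
    intro P hP
    rw [MeasureTheory.Measure.volume_eq_prod]
    exact (Measure.quasiMeasurePreserving_fst.ae hP).and
      (Measure.quasiMeasurePreserving_snd.ae hP)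
  -- measurability helper
  have hmeas2 : ∀ q r : ℝ → ℝ, AEStronglyMeasurable q (volume : Measure ℝ) →
      AEStronglyMeasurable r (volume : Measure ℝ) →
      AEStronglyMeasurable (fun z : ℝ × ℝ => h z.1 z.2 * q z.1 * r z.2)
        (volume : Measure (ℝ × ℝ)) := by
    intro q r hq hr
    have h1 : AEStronglyMeasurable (fun z : ℝ × ℝ => h z.1 z.2)
        (volume : Measure (ℝ × ℝ)) := hmeas.aestronglyMeasurable
    have h2 : AEStronglyMeasurable (fun z : ℝ × ℝ => q z.1)
        (volume : Measure (ℝ × ℝ)) := by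
      rw [MeasureTheory.Measure.volume_eq_prod]
      exact hq.comp_quasiMeasurePreserving Measure.quasiMeasurePreserving_fst
    have h3 : AEStronglyMeasurable (fun z : ℝ × ℝ => r z.2)
        (volume : Measure (ℝ × ℝ)) := by
      rw [MeasureTheory.Measure.volume_eq_prod]
      exact hr.comp_quasiMeasurePreserving Measure.quasiMeasurePreserving_snd
    exact (h1.mul h2).mul h3
  -- integrability helper
  have hInt2 : ∀ (q r : ℝ → ℝ) (c d : ℝ), AEStronglyMeasurable q (volume : Measure ℝ) →
      AEStronglyMeasurable r (volume : Measure ℝ) →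
      (∀ᵐ x : ℝ, |q x| ≤ c * v x) → (∀ᵐ x : ℝ, |r x| ≤ d * v x) →
      Integrable (fun z : ℝ × ℝ => h z.1 z.2 * q z.1 * r z.2)
        (volume : Measure (ℝ × ℝ)) := by
    intro q r c d hq hr hqb hrb
    refine (hint.const_mul (c * d)).mono' (hmeas2 q r hq hr) ?_
    filter_upwards [prodae _ ((hqb.and hrb).and hv0ae)] with z hz
    obtain ⟨⟨⟨hq1, _⟩, hv1⟩, ⟨⟨_, hr2⟩, hv2⟩⟩ := hz
    have e : ‖h z.1 z.2 * q z.1 * r z.2‖ = |h z.1 z.2| * |q z.1| * |r z.2| := by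
      rw [Real.norm_eq_abs, abs_mul, abs_mul]
    rw [e]
    have h0 : (0 : ℝ) ≤ |h z.1 z.2| := abs_nonneg _
    nlinarith [abs_nonneg (q z.1), abs_nonneg (r z.2),
      mul_le_mul_of_nonneg_left hq1 h0,
      mul_le_mul_of_nonneg_left hr2 (mul_nonneg h0 (le_trans (abs_nonneg _) hq1)),
      mul_le_mul_of_nonneg_right (mul_le_mul_of_nonneg_left hq1 h0)
        (le_trans (abs_nonneg _) hr2)]
  -- Fubini helper
  have hiter : ∀ (q r : ℝ → ℝ) (c d : ℝ), AEStronglyMeasurable q (volume : Measure ℝ) →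
      AEStronglyMeasurable r (volume : Measure ℝ) →
      (∀ᵐ x : ℝ, |q x| ≤ c * v x) → (∀ᵐ x : ℝ, |r x| ≤ d * v x) →
      (∫ x : ℝ, ∫ y : ℝ, h x y * q x * r y) =
        ∫ z : ℝ × ℝ, h z.1 z.2 * q z.1 * r z.2 := by
    intro q r c d hq hr hqb hrb
    have hI := hInt2 q r c d hq hr hqb hrb
    rw [MeasureTheory.Measure.volume_eq_prod] at hI
    rw [MeasureTheory.Measure.volume_eq_prod]
    exact MeasureTheory.integral_integral (f := fun x y => h x y * q x * r y) hI
  -- swap helper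
  have hswap : ∀ q r : ℝ → ℝ,
      (∫ z : ℝ × ℝ, h z.1 z.2 * q z.1 * r z.2) =
        ∫ z : ℝ × ℝ, h z.1 z.2 * r z.1 * q z.2 := by
    intro q r
    rw [MeasureTheory.Measure.volume_eq_prod]
    rw [← MeasureTheory.integral_prod_swap
      (fun z : ℝ × ℝ => h z.1 z.2 * r z.1 * q z.2)]
    refine integral_congr_ae (Filter.Eventually.of_forall fun z => ?_)
    simp only [Prod.fst_swap, Prod.snd_swap]
    rw [hsymm z.2 z.1]
    ring
  -- bounds for fixed densities
  have hfb : ∀ᵐ x : ℝ, |p l₀ x| ≤ 1 * v x := by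
    filter_upwards [hmaster] with x hx
    simpa using (hx.2.1 l₀ hl₀Ioo).1
  have hp'b : ∀ᵐ x : ℝ, |p' l₀ x| ≤ 1 * v x := by
    filter_upwards [hmaster] with x hx
    simpa using (hx.2.1 l₀ hl₀Ioo).2.1
  have hgb : ∀ n : ℕ, L n ∈ Set.Ioo (l₀ - ε) (l₀ + ε) →
      ∀ᵐ x : ℝ, |p (L n) x| ≤ 1 * v x := by
    intro n hn
    filter_upwards [hmaster] with x hx
    simpa using (hx.2.1 (L n) hn).1
  -- measurability of p' l₀
  have hp'm : AEStronglyMeasurable (p' l₀) (volume : Measure ℝ) := by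
    have hseq : Tendsto (fun k : ℕ => l₀ + ε / (k + 2)) atTop (nhdsWithin l₀ {l₀}ᶜ) := by
      refine tendsto_nhdsWithin_iff.2 ⟨?_, ?_⟩
      · have : Tendsto (fun k : ℕ => ε / ((k : ℝ) + 2)) atTop (nhds 0) :=
          Tendsto.div_atTop tendsto_const_nhds
            (tendsto_atTop_add_const_right _ 2 tendsto_natCast_atTop_atTop)
        have h1 : Tendsto (fun k : ℕ => l₀ + ε / ((k : ℝ) + 2)) atTop (nhds (l₀ + 0)) :=
          (tendsto_const_nhds : Tendsto (fun _ : ℕ => l₀) atTop (nhds l₀)).add this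
        simpa using h1
      · refine Filter.Eventually.of_forall fun k => ?_
        simp only [Set.mem_compl_iff, Set.mem_singleton_iff]
        intro hcon
        have hpos : (0 : ℝ) < ε / ((k : ℝ) + 2) := by positivity
        linarith [hcon]
    refine aestronglyMeasurable_of_tendsto_ae atTop
      (f := fun k : ℕ => fun x : ℝ =>
        (p (l₀ + ε / ((k : ℝ) + 2)) x - p l₀ x) / (ε / ((k : ℝ) + 2)))
      (fun k => (((hpmeas _).sub (hpmeas _)).div_const _).aestronglyMeasurable) ?_
    filter_upwards [hderiv] with x Hd
    have hslope := hasDerivAt_iff_tendsto_slope.mp (Hd l₀ hl₀Ioo)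
    have := hslope.comp hseq
    refine this.congr fun k => ?_
    rw [Function.comp_apply, slope_def_field]
    congr 1
    ring
  -- product-level convergence statements
  have hmaster2 := prodae _ hmaster
  -- the first DCT
  have hDCT1 : Tendsto (fun n : ℕ => ∫ z : ℝ × ℝ,
      h z.1 z.2 * (Real.sqrt n * (p l₀ z.1 - p (L n) z.1)) * (p l₀ z.2 + p (L n) z.2))
      atTop (nhds (∫ z : ℝ × ℝ,
        h z.1 z.2 * (-(a * p' l₀ z.1)) * (p l₀ z.2 + p l₀ z.2))) := by
    refine tendsto_integral_filter_of_dominated_convergence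
      (fun z => (2 * |a|) * (|h z.1 z.2| * v z.1 * v z.2)) ?_ ?_ (hint.const_mul _) ?_
    · refine Filter.Eventually.of_forall fun n => ?_
      exact hmeas2 _ _
        (((hpmeas l₀).sub (hpmeas (L n))).const_mul _).aestronglyMeasurable
        ((hpmeas l₀).add (hpmeas (L n))).aestronglyMeasurable
    · filter_upwards [hev, hn1] with n hn hn1'
      filter_upwards [hmaster2] with z hz
      obtain ⟨⟨hv1, hb1, _, _⟩, ⟨hv2, hb2, _, _⟩⟩ := hz
      have hs0 : Real.sqrt n ≠ 0 := hsne n hn1'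
      have hsnn : (0 : ℝ) ≤ Real.sqrt n := Real.sqrt_nonneg _
      have e1 : |L n - l₀| = |a| / Real.sqrt n := by
        rw [hLmem]; rw [add_sub_cancel_left, abs_div, abs_of_nonneg hsnn]
      have hq : |Real.sqrt n * (p l₀ z.1 - p (L n) z.1)| ≤ |a| * v z.1 := by
        rw [abs_mul, abs_of_nonneg hsnn, abs_sub_comm]
        have := (hb1 (L n) hn).2.2
        calc Real.sqrt n * |p (L n) z.1 - p l₀ z.1|
            ≤ Real.sqrt n * (v z.1 * |L n - l₀|) := by
              exact mul_le_mul_of_nonneg_left this hsnn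
          _ = |a| * v z.1 := by rw [e1]; field_simp
      have hr : |p l₀ z.2 + p (L n) z.2| ≤ 2 * v z.2 := by
        calc |p l₀ z.2 + p (L n) z.2| ≤ |p l₀ z.2| + |p (L n) z.2| := abs_add_le _ _
          _ ≤ 2 * v z.2 := by
              have := (hb2 l₀ hl₀Ioo).1
              have := (hb2 (L n) hn).1
              linarith
      have e : ‖h z.1 z.2 * (Real.sqrt n * (p l₀ z.1 - p (L n) z.1)) *
          (p l₀ z.2 + p (L n) z.2)‖ =
          |h z.1 z.2| * |Real.sqrt n * (p l₀ z.1 - p (L n) z.1)| *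
          |p l₀ z.2 + p (L n) z.2| := by
        rw [Real.norm_eq_abs, abs_mul, abs_mul]
      rw [e]
      have h0 : (0 : ℝ) ≤ |h z.1 z.2| := abs_nonneg _
      nlinarith [abs_nonneg (Real.sqrt n * (p l₀ z.1 - p (L n) z.1)),
        abs_nonneg (p l₀ z.2 + p (L n) z.2),
        mul_le_mul_of_nonneg_left hq h0, abs_nonneg a,
        mul_le_mul_of_nonneg_left hr (mul_nonneg h0 (mul_nonneg (abs_nonneg a) hv1)),
        mul_le_mul_of_nonneg_right (mul_le_mul_of_nonneg_left hq h0)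
          (le_trans (abs_nonneg _) hr)]
    · filter_upwards [hmaster2] with z hz
      obtain ⟨⟨_, _, hC1, _⟩, ⟨_, _, _, hD2⟩⟩ := hz
      exact (tendsto_const_nhds.mul hC1).mul
        (tendsto_const_nhds.add hD2)
  -- second DCT
  have hDCT2 : Tendsto (fun n : ℕ => ∫ z : ℝ × ℝ,
      h z.1 z.2 * (Real.sqrt n * (p l₀ z.1 - p (L n) z.1)) * (p l₀ z.2 - p (L n) z.2))
      atTop (nhds (∫ z : ℝ × ℝ,
        h z.1 z.2 * (-(a * p' l₀ z.1)) * (p l₀ z.2 - p l₀ z.2))) := by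
    refine tendsto_integral_filter_of_dominated_convergence
      (fun z => (2 * |a|) * (|h z.1 z.2| * v z.1 * v z.2)) ?_ ?_ (hint.const_mul _) ?_
    · refine Filter.Eventually.of_forall fun n => ?_
      exact hmeas2 _ _
        (((hpmeas l₀).sub (hpmeas (L n))).const_mul _).aestronglyMeasurable
        ((hpmeas l₀).sub (hpmeas (L n))).aestronglyMeasurable
    · filter_upwards [hev, hn1] with n hn hn1'
      filter_upwards [hmaster2] with z hz
      obtain ⟨⟨hv1, hb1, _, _⟩, ⟨hv2, hb2, _, _⟩⟩ := hz
      have hs0 : Real.sqrt n ≠ 0 := hsne n hn1'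
      have hsnn : (0 : ℝ) ≤ Real.sqrt n := Real.sqrt_nonneg _
      have e1 : |L n - l₀| = |a| / Real.sqrt n := by
        rw [hLmem]; rw [add_sub_cancel_left, abs_div, abs_of_nonneg hsnn]
      have hq : |Real.sqrt n * (p l₀ z.1 - p (L n) z.1)| ≤ |a| * v z.1 := by
        rw [abs_mul, abs_of_nonneg hsnn, abs_sub_comm]
        have := (hb1 (L n) hn).2.2
        calc Real.sqrt n * |p (L n) z.1 - p l₀ z.1|
            ≤ Real.sqrt n * (v z.1 * |L n - l₀|) := by
              exact mul_le_mul_of_nonneg_left this hsnn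
          _ = |a| * v z.1 := by rw [e1]; field_simp
      have hr : |p l₀ z.2 - p (L n) z.2| ≤ 2 * v z.2 := by
        calc |p l₀ z.2 - p (L n) z.2| ≤ |p l₀ z.2| + |p (L n) z.2| := abs_sub _ _
          _ ≤ 2 * v z.2 := by
              have := (hb2 l₀ hl₀Ioo).1
              have := (hb2 (L n) hn).1
              linarith
      have e : ‖h z.1 z.2 * (Real.sqrt n * (p l₀ z.1 - p (L n) z.1)) *
          (p l₀ z.2 - p (L n) z.2)‖ =
          |h z.1 z.2| * |Real.sqrt n * (p l₀ z.1 - p (L n) z.1)| *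
          |p l₀ z.2 - p (L n) z.2| := by
        rw [Real.norm_eq_abs, abs_mul, abs_mul]
      rw [e]
      have h0 : (0 : ℝ) ≤ |h z.1 z.2| := abs_nonneg _
      nlinarith [abs_nonneg (Real.sqrt n * (p l₀ z.1 - p (L n) z.1)),
        abs_nonneg (p l₀ z.2 - p (L n) z.2),
        mul_le_mul_of_nonneg_left hq h0, abs_nonneg a,
        mul_le_mul_of_nonneg_left hr (mul_nonneg h0 (mul_nonneg (abs_nonneg a) hv1)),
        mul_le_mul_of_nonneg_right (mul_le_mul_of_nonneg_left hq h0)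
          (le_trans (abs_nonneg _) hr)]
    · filter_upwards [hmaster2] with z hz
      obtain ⟨⟨_, _, hC1, _⟩, ⟨_, _, _, hD2⟩⟩ := hz
      exact (tendsto_const_nhds.mul hC1).mul
        (tendsto_const_nhds.sub hD2)
  -- identify the limit of the first DCT with Δ
  have hlim1 : (∫ z : ℝ × ℝ,
      h z.1 z.2 * (-(a * p' l₀ z.1)) * (p l₀ z.2 + p l₀ z.2)) = Δ := by
    have e : (fun z : ℝ × ℝ => h z.1 z.2 * (-(a * p' l₀ z.1)) * (p l₀ z.2 + p l₀ z.2)) =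
        fun z => (-2 * a) • (h z.1 z.2 * p' l₀ z.1 * p l₀ z.2) := by
      funext z; simp only [smul_eq_mul]; ring
    rw [e, integral_smul, hΔ, hiter (p' l₀) (p l₀) 1 1 hp'm
      (hpmeas l₀).aestronglyMeasurable hp'b hfb]
    simp [smul_eq_mul]
  have hlim2 : (∫ z : ℝ × ℝ,
      h z.1 z.2 * (-(a * p' l₀ z.1)) * (p l₀ z.2 - p l₀ z.2)) = 0 := by
    simp
  -- eventual identification of √n (θF - θG n)
  have key1 : ∀ᶠ n : ℕ in atTop, Real.sqrt n * (θF - θG n) =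
      ∫ z : ℝ × ℝ, h z.1 z.2 * (Real.sqrt n * (p l₀ z.1 - p (L n) z.1)) *
        (p l₀ z.2 + p (L n) z.2) := by
    filter_upwards [hev] with n hn
    have hgbn := hgb n hn
    have hgm : AEStronglyMeasurable (p (L n)) (volume : Measure ℝ) :=
      (hpmeas (L n)).aestronglyMeasurable
    have hfm : AEStronglyMeasurable (p l₀) (volume : Measure ℝ) :=
      (hpmeas l₀).aestronglyMeasurable
    have hA := hInt2 (p l₀) (p l₀) 1 1 hfm hfm hfb hfb
    have hB := hInt2 (p l₀) (p (L n)) 1 1 hfm hgm hfb hgbn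
    have hC := hInt2 (p (L n)) (p l₀) 1 1 hgm hfm hgbn hfb
    have hD := hInt2 (p (L n)) (p (L n)) 1 1 hgm hgm hgbn hgbn
    have hAB : Integrable (fun z : ℝ × ℝ =>
        h z.1 z.2 * p l₀ z.1 * p l₀ z.2 + h z.1 z.2 * p l₀ z.1 * p (L n) z.2)
        (volume : Measure (ℝ × ℝ)) := hA.add hB
    have hCD : Integrable (fun z : ℝ × ℝ =>
        h z.1 z.2 * p (L n) z.1 * p l₀ z.2 + h z.1 z.2 * p (L n) z.1 * p (L n) z.2)
        (volume : Measure (ℝ × ℝ)) := hC.add hD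
    have e : (fun z : ℝ × ℝ => h z.1 z.2 * (Real.sqrt n * (p l₀ z.1 - p (L n) z.1)) *
        (p l₀ z.2 + p (L n) z.2)) = fun z => (Real.sqrt n : ℝ) •
        ((h z.1 z.2 * p l₀ z.1 * p l₀ z.2 + h z.1 z.2 * p l₀ z.1 * p (L n) z.2) -
         (h z.1 z.2 * p (L n) z.1 * p l₀ z.2 + h z.1 z.2 * p (L n) z.1 * p (L n) z.2)) := by
      funext z; simp only [smul_eq_mul]; ring
    rw [hθF, hθG n, hg n, ← hLmem n,
      hiter (p l₀) (p l₀) 1 1 hfm hfm hfb hfb,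
      hiter (p (L n)) (p (L n)) 1 1 hgm hgm hgbn hgbn,
      e, integral_smul, integral_sub hAB hCD,
      integral_add hA hB, integral_add hC hD, hswap (p (L n)) (p l₀)]
    simp only [smul_eq_mul]
    ring
  -- eventual identification of √n ρ n
  have key2 : ∀ᶠ n : ℕ in atTop, Real.sqrt n * ρ n =
      (-(1 : ℝ) / 2) * ∫ z : ℝ × ℝ, h z.1 z.2 *
        (Real.sqrt n * (p l₀ z.1 - p (L n) z.1)) * (p l₀ z.2 - p (L n) z.2) := by
    filter_upwards [hev] with n hn
    have hgbn := hgb n hn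
    have hgm : AEStronglyMeasurable (p (L n)) (volume : Measure ℝ) :=
      (hpmeas (L n)).aestronglyMeasurable
    have hfm : AEStronglyMeasurable (p l₀) (volume : Measure ℝ) :=
      (hpmeas l₀).aestronglyMeasurable
    have hA := hInt2 (p l₀) (p l₀) 1 1 hfm hfm hfb hfb
    have hB := hInt2 (p l₀) (p (L n)) 1 1 hfm hgm hfb hgbn
    have hC := hInt2 (p (L n)) (p l₀) 1 1 hgm hfm hgbn hfb
    have hD := hInt2 (p (L n)) (p (L n)) 1 1 hgm hgm hgbn hgbn
    have hAB' : Integrable (fun z : ℝ × ℝ =>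
        h z.1 z.2 * p l₀ z.1 * p l₀ z.2 - h z.1 z.2 * p l₀ z.1 * p (L n) z.2)
        (volume : Measure (ℝ × ℝ)) := hA.sub hB
    have hCD' : Integrable (fun z : ℝ × ℝ =>
        h z.1 z.2 * p (L n) z.1 * p l₀ z.2 - h z.1 z.2 * p (L n) z.1 * p (L n) z.2)
        (volume : Measure (ℝ × ℝ)) := hC.sub hD
    have e : (fun z : ℝ × ℝ => h z.1 z.2 * (Real.sqrt n * (p l₀ z.1 - p (L n) z.1)) *
        (p l₀ z.2 - p (L n) z.2)) = fun z => (Real.sqrt n : ℝ) •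
        ((h z.1 z.2 * p l₀ z.1 * p l₀ z.2 - h z.1 z.2 * p l₀ z.1 * p (L n) z.2) -
         (h z.1 z.2 * p (L n) z.1 * p l₀ z.2 - h z.1 z.2 * p (L n) z.1 * p (L n) z.2)) := by
      funext z; simp only [smul_eq_mul]; ring
    rw [hρ n, hθFG n, hθF, hθG n, hg n, ← hLmem n,
      hiter (p l₀) (p (L n)) 1 1 hfm hgm hfb hgbn,
      hiter (p l₀) (p l₀) 1 1 hfm hfm hfb hfb,
      hiter (p (L n)) (p (L n)) 1 1 hgm hgm hgbn hgbn,
      e, integral_smul, integral_sub hAB' hCD',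
      integral_sub hA hB, integral_sub hC hD, hswap (p (L n)) (p l₀)]
    simp only [smul_eq_mul]
    ring
  constructor
  · have h1 := hDCT1
    rw [hlim1] at h1
    exact h1.congr' (key1.mono fun n e => e.symm)
  · have h2 := hDCT2
    rw [hlim2] at h2
    have h3 : Tendsto (fun n : ℕ => (-(1 : ℝ) / 2) * ∫ z : ℝ × ℝ, h z.1 z.2 *
        (Real.sqrt n * (p l₀ z.1 - p (L n) z.1)) * (p l₀ z.2 - p (L n) z.2))
        atTop (nhds 0) := by
      simpa using h2.const_mul (-(1 : ℝ) / 2)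
    exact h3.congr' (key2.mono fun n e => e.symm)
end

section
/- Let F and G be probability distributions on ℝ with Lebesgue densities f and g, respectively, each with finite first moment (∫|x|f(x)dx < ∞ and ∫|x|g(x)dx < ∞). Then for the kernel h(x,y) = |x−y|, the eccentricity is nonnegative: ρ_{FG} = ∬ |x−y| f(x)g(y) dx dy − (1/2)(∬ |x−y| f(x)f(y) dx dy + ∬ |x−y| g(x)g(y) dx dy) ≥ 0; equivalently, ∬ |x−y| (f(x)−g(x))(f(y)−g(y)) dx dy ≤ 0. -/
open MeasureTheory


noncomputable def uu (x t : ℝ) : ℝ := if t < x then 1 else 0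

lemma usq (x y t : ℝ) :
    (uu x t - uu y t)^2 = (Set.Ico (min x y) (max x y)).indicator (fun _ => (1:ℝ)) t := by
  simp only [uu, Set.indicator_apply, Set.mem_Ico, min_le_iff, lt_max_iff]
  by_cases h1 : t < x <;> by_cases h2 : t < y <;>
    simp only [h1, h2, if_true, if_false] <;> split_ifs with h3 <;>
    first
    | (exfalso; first
        | (rcases h3 with ⟨h4 | h4, -⟩ <;> linarith)
        | exact h3.2.elim id id
        | exact h3 ⟨Or.inr (le_of_not_gt h2), Or.inl trivial⟩
        | exact h3 ⟨Or.inl (le_of_not_gt h1), Or.inr trivial⟩)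
    | norm_num

lemma usq_int (x y : ℝ) : ∫ t, (uu x t - uu y t)^2 = |x - y| := by
  simp_rw [usq]
  rw [integral_indicator measurableSet_Ico, setIntegral_const, measureReal_def, Real.volume_Ico,
    smul_eq_mul, mul_one, ENNReal.toReal_ofReal (by simp [sub_nonneg, min_le_max])]
  rw [max_sub_min_eq_abs, abs_sub_comm]

lemma usq_integrable (x y : ℝ) (c : ℝ) :
    Integrable (fun t => (uu x t - uu y t)^2 * c) (volume : Measure ℝ) := by
  have : Integrable (fun t => (Set.Ico (min x y) (max x y)).indicator (fun _ => (1:ℝ)) t * c)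
      (volume : Measure ℝ) := by
    simp_rw [← Set.indicator_mul_const, one_mul]
    rw [integrable_indicator_iff measurableSet_Ico]
    exact integrableOn_const (by rw [Real.volume_Ico]; exact ENNReal.ofReal_ne_top)
  exact this.congr (Filter.Eventually.of_forall fun t => by simp only [usq])


lemma gini_integrable_kernel_prod (φ ψ : ℝ → ℝ) (hφm : Measurable φ) (hψm : Measurable ψ)
    (hφ : Integrable φ (volume : Measure ℝ)) (hψ : Integrable ψ (volume : Measure ℝ))
    (hφ1 : Integrable (fun x => |x| * φ x) (volume : Measure ℝ))
    (hψ1 : Integrable (fun x => |x| * ψ x) (volume : Measure ℝ)) :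
    Integrable (fun p : ℝ × ℝ => |p.1 - p.2| * φ p.1 * ψ p.2)
      ((volume : Measure ℝ).prod volume) := by
  have hφa : Integrable (fun x => |x| * |φ x|) (volume : Measure ℝ) :=
    hφ1.abs.congr (Filter.Eventually.of_forall fun x => by simp [abs_mul])
  have hψa : Integrable (fun x => |x| * |ψ x|) (volume : Measure ℝ) :=
    hψ1.abs.congr (Filter.Eventually.of_forall fun x => by simp [abs_mul])
  have hM : Integrable (fun p : ℝ × ℝ => (|p.1| * |φ p.1|) * |ψ p.2| + |φ p.1| * (|p.2| * |ψ p.2|))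
      ((volume : Measure ℝ).prod volume) :=
    (hφa.mul_prod hψ.abs).add (hφ.abs.mul_prod hψa)
  have hmeas : AEStronglyMeasurable (fun p : ℝ × ℝ => |p.1 - p.2| * φ p.1 * ψ p.2)
      ((volume : Measure ℝ).prod volume) :=
    (((measurable_fst.sub measurable_snd).abs.mul (hφm.comp measurable_fst)).mul
      (hψm.comp measurable_snd)).aestronglyMeasurable
  refine hM.mono' hmeas (Filter.Eventually.of_forall fun p => ?_)
  have h1 : |p.1 - p.2| ≤ |p.1| + |p.2| := abs_sub _ _
  have h2 : (0:ℝ) ≤ |φ p.1| := abs_nonneg _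
  have h3 : (0:ℝ) ≤ |ψ p.2| := abs_nonneg _
  calc ‖|p.1 - p.2| * φ p.1 * ψ p.2‖ = |p.1 - p.2| * |φ p.1| * |ψ p.2| := by
        simp [abs_mul]
    _ ≤ (|p.1| + |p.2|) * |φ p.1| * |ψ p.2| := by
        gcongr
    _ = (|p.1| * |φ p.1|) * |ψ p.2| + |φ p.1| * (|p.2| * |ψ p.2|) := by ring

noncomputable def FF (d : ℝ → ℝ) (p : ℝ × ℝ) (t : ℝ) : ℝ :=
  (uu p.1 t - uu p.2 t)^2 * (d p.1 * d p.2)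

lemma gini_quad_nonpos (d : ℝ → ℝ) (hm : Measurable d) (hi : Integrable d (volume : Measure ℝ))
    (h1 : Integrable (fun x => |x| * d x) (volume : Measure ℝ)) (hsum : (∫ x, d x) = 0) :
    (∫ p : ℝ × ℝ, |p.1 - p.2| * d p.1 * d p.2 ∂((volume : Measure ℝ).prod volume)) ≤ 0 := by
  have hda : Integrable (fun x => |x| * |d x|) (volume : Measure ℝ) :=
    h1.abs.congr (Filter.Eventually.of_forall fun x => by simp [abs_mul])
  -- measurability of uncurried FF
  have hu1 : Measurable fun q : (ℝ × ℝ) × ℝ => uu q.1.1 q.2 := by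
    unfold uu
    exact Measurable.ite (measurableSet_lt measurable_snd measurable_fst.fst)
      measurable_const measurable_const
  have hu2 : Measurable fun q : (ℝ × ℝ) × ℝ => uu q.1.2 q.2 := by
    unfold uu
    exact Measurable.ite (measurableSet_lt measurable_snd measurable_fst.snd)
      measurable_const measurable_const
  have hmF : Measurable (Function.uncurry (FF d)) := by
    have : Function.uncurry (FF d) = fun q : (ℝ × ℝ) × ℝ =>
        (uu q.1.1 q.2 - uu q.1.2 q.2)^2 * (d q.1.1 * d q.1.2) := rfl
    rw [this]
    exact ((hu1.sub hu2).pow_const 2).mul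
      ((hm.comp measurable_fst.fst).mul (hm.comp measurable_fst.snd))
  -- integrability of uncurried FF
  have hFint : Integrable (Function.uncurry (FF d))
      (((volume : Measure ℝ).prod volume).prod volume) := by
    rw [integrable_prod_iff hmF.aestronglyMeasurable]
    constructor
    · exact Filter.Eventually.of_forall fun p => usq_integrable p.1 p.2 (d p.1 * d p.2)
    · have hnorm : ∀ p : ℝ × ℝ,
          (∫ t, ‖Function.uncurry (FF d) (p, t)‖) = |p.1 - p.2| * |d p.1| * |d p.2| := by
        intro p
        have he : ∀ t, ‖Function.uncurry (FF d) (p, t)‖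
            = (uu p.1 t - uu p.2 t)^2 * |d p.1 * d p.2| := by
          intro t
          show ‖(uu p.1 t - uu p.2 t)^2 * (d p.1 * d p.2)‖ = _
          rw [norm_mul, Real.norm_eq_abs, Real.norm_eq_abs,
            abs_of_nonneg (sq_nonneg (uu p.1 t - uu p.2 t))]
        simp_rw [he]
        rw [integral_mul_const, usq_int, abs_mul, mul_assoc]
      have hint : Integrable (fun p : ℝ × ℝ => |p.1 - p.2| * |d p.1| * |d p.2|)
          ((volume : Measure ℝ).prod volume) :=
        gini_integrable_kernel_prod _ _ hm.abs hm.abs hi.abs hi.abs hda hda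
      exact hint.congr (Filter.Eventually.of_forall fun p => (hnorm p).symm)
  -- pointwise identity and swap
  have step1 : (fun p : ℝ × ℝ => |p.1 - p.2| * d p.1 * d p.2)
      = fun p => ∫ t, FF d p t := by
    funext p
    rw [show (fun t => FF d p t) = fun t => (uu p.1 t - uu p.2 t)^2 * (d p.1 * d p.2) from rfl,
      integral_mul_const, usq_int, ← mul_assoc]
  rw [step1, integral_integral_swap hFint]
  -- inner integral is -2 D(t)^2
  refine integral_nonpos fun t => ?_
  simp only [Pi.zero_apply]
  show (∫ p : ℝ × ℝ, FF d p t ∂((volume : Measure ℝ).prod volume)) ≤ 0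
  have hsq : ∀ x y : ℝ, (uu x t - uu y t)^2 = uu x t + uu y t - 2*(uu x t * uu y t) := by
    intro x y; unfold uu; split_ifs <;> norm_num
  have hutm : Measurable fun x => uu x t := by
    unfold uu
    exact Measurable.ite (measurableSet_lt measurable_const measurable_id)
      measurable_const measurable_const
  have hut : Integrable (fun x => uu x t * d x) (volume : Measure ℝ) := by
    refine hi.abs.mono' (hutm.mul hm).aestronglyMeasurable
      (Filter.Eventually.of_forall fun x => ?_)
    simp only [Real.norm_eq_abs, abs_mul, abs_abs, uu]
    split_ifs <;> simp [abs_nonneg]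
  have e1 : (fun p : ℝ × ℝ => FF d p t)
      = fun p => ((uu p.1 t * d p.1) * d p.2 + d p.1 * (uu p.2 t * d p.2))
        - 2 * ((uu p.1 t * d p.1) * (uu p.2 t * d p.2)) := by
    funext p
    show (uu p.1 t - uu p.2 t)^2 * (d p.1 * d p.2) = _
    rw [hsq]; ring
  have hABi : Integrable (fun p : ℝ × ℝ => (uu p.1 t * d p.1) * d p.2
      + d p.1 * (uu p.2 t * d p.2)) ((volume : Measure ℝ).prod volume) :=
    (hut.mul_prod hi).add (hi.mul_prod hut)
  have hCi : Integrable (fun p : ℝ × ℝ => 2 * ((uu p.1 t * d p.1) * (uu p.2 t * d p.2)))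
      ((volume : Measure ℝ).prod volume) := (hut.mul_prod hut).const_mul 2
  rw [e1, integral_sub hABi hCi, integral_add (hut.mul_prod hi) (hi.mul_prod hut),
    integral_prod_mul (fun x => uu x t * d x) d, integral_prod_mul d (fun x => uu x t * d x),
    integral_const_mul, integral_prod_mul (fun x => uu x t * d x) (fun x => uu x t * d x), hsum]
  nlinarith [mul_self_nonneg (∫ x, uu x t * d x)]


/-- Proposition: for Gini's mean difference kernel `h(x,y) = |x-y|`, the eccentricity
`ρ_{FG}` is nonnegative for any two distributions with Lebesgue densities and finite first
moments. -/
theorem gini_eccentricity_nonneg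
    (f g : ℝ → ℝ)
    (hfmeas : Measurable f) (hgmeas : Measurable g)
    (hf0 : ∀ x, 0 ≤ f x) (hg0 : ∀ x, 0 ≤ g x)
    (hfint : Integrable f (volume : Measure ℝ)) (hgint : Integrable g (volume : Measure ℝ))
    (hf1 : (∫ x : ℝ, f x) = 1) (hg1 : (∫ x : ℝ, g x) = 1)
    (hfmom : Integrable (fun x : ℝ => |x| * f x) (volume : Measure ℝ))
    (hgmom : Integrable (fun x : ℝ => |x| * g x) (volume : Measure ℝ)) :
    0 ≤ (∫ x : ℝ, ∫ y : ℝ, |x - y| * f x * g y)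
        - (1 / 2) * ((∫ x : ℝ, ∫ y : ℝ, |x - y| * f x * f y)
            + ∫ x : ℝ, ∫ y : ℝ, |x - y| * g x * g y)
    ∧ (∫ x : ℝ, ∫ y : ℝ, |x - y| * (f x - g x) * (f y - g y)) ≤ 0 := by
  have hdm : Measurable fun x => f x - g x := hfmeas.sub hgmeas
  have hdi : Integrable (fun x => f x - g x) (volume : Measure ℝ) := hfint.sub hgint
  have hdmom : Integrable (fun x => |x| * (f x - g x)) (volume : Measure ℝ) :=
    (hfmom.sub hgmom).congr (Filter.Eventually.of_forall fun x => by simp only [Pi.sub_apply]; ring)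
  have hdsum : (∫ x, f x - g x) = 0 := by
    rw [integral_sub hfint hgint, hf1, hg1]; ring
  have key : (∫ p : ℝ × ℝ, |p.1 - p.2| * (f p.1 - g p.1) * (f p.2 - g p.2)
      ∂((volume : Measure ℝ).prod volume)) ≤ 0 :=
    gini_quad_nonpos (fun x => f x - g x) hdm hdi hdmom hdsum
  have Iff_ : Integrable (fun p : ℝ × ℝ => |p.1 - p.2| * f p.1 * f p.2)
      ((volume : Measure ℝ).prod volume) :=
    gini_integrable_kernel_prod f f hfmeas hfmeas hfint hfint hfmom hfmom
  have Ifg : Integrable (fun p : ℝ × ℝ => |p.1 - p.2| * f p.1 * g p.2)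
      ((volume : Measure ℝ).prod volume) :=
    gini_integrable_kernel_prod f g hfmeas hgmeas hfint hgint hfmom hgmom
  have Igf : Integrable (fun p : ℝ × ℝ => |p.1 - p.2| * g p.1 * f p.2)
      ((volume : Measure ℝ).prod volume) :=
    gini_integrable_kernel_prod g f hgmeas hfmeas hgint hfint hgmom hfmom
  have Igg : Integrable (fun p : ℝ × ℝ => |p.1 - p.2| * g p.1 * g p.2)
      ((volume : Measure ℝ).prod volume) :=
    gini_integrable_kernel_prod g g hgmeas hgmeas hgint hgint hgmom hgmom
  have Idd : Integrable (fun p : ℝ × ℝ => |p.1 - p.2| * (f p.1 - g p.1) * (f p.2 - g p.2))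
      ((volume : Measure ℝ).prod volume) :=
    gini_integrable_kernel_prod _ _ hdm hdm hdi hdi hdmom hdmom
  have Eff : (∫ x : ℝ, ∫ y : ℝ, |x - y| * f x * f y)
      = ∫ p : ℝ × ℝ, |p.1 - p.2| * f p.1 * f p.2 ∂((volume : Measure ℝ).prod volume) :=
    (integral_prod _ Iff_).symm
  have Efg : (∫ x : ℝ, ∫ y : ℝ, |x - y| * f x * g y)
      = ∫ p : ℝ × ℝ, |p.1 - p.2| * f p.1 * g p.2 ∂((volume : Measure ℝ).prod volume) :=
    (integral_prod _ Ifg).symm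
  have Egg : (∫ x : ℝ, ∫ y : ℝ, |x - y| * g x * g y)
      = ∫ p : ℝ × ℝ, |p.1 - p.2| * g p.1 * g p.2 ∂((volume : Measure ℝ).prod volume) :=
    (integral_prod _ Igg).symm
  have Edd : (∫ x : ℝ, ∫ y : ℝ, |x - y| * (f x - g x) * (f y - g y))
      = ∫ p : ℝ × ℝ, |p.1 - p.2| * (f p.1 - g p.1) * (f p.2 - g p.2)
        ∂((volume : Measure ℝ).prod volume) :=
    (integral_prod _ Idd).symm
  have Eswap : (∫ p : ℝ × ℝ, |p.1 - p.2| * g p.1 * f p.2 ∂((volume : Measure ℝ).prod volume))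
      = ∫ p : ℝ × ℝ, |p.1 - p.2| * f p.1 * g p.2 ∂((volume : Measure ℝ).prod volume) := by
    rw [← integral_prod_swap (fun p : ℝ × ℝ => |p.1 - p.2| * f p.1 * g p.2)]
    congr 1
    funext z
    show |z.1 - z.2| * g z.1 * f z.2 = |z.swap.1 - z.swap.2| * f z.swap.1 * g z.swap.2
    simp only [Prod.fst_swap, Prod.snd_swap]
    rw [abs_sub_comm]; ring
  have Edecomp : (∫ p : ℝ × ℝ, |p.1 - p.2| * (f p.1 - g p.1) * (f p.2 - g p.2)
        ∂((volume : Measure ℝ).prod volume))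
      = (∫ p : ℝ × ℝ, |p.1 - p.2| * f p.1 * f p.2 ∂((volume : Measure ℝ).prod volume))
        - (∫ p : ℝ × ℝ, |p.1 - p.2| * f p.1 * g p.2 ∂((volume : Measure ℝ).prod volume))
        - (∫ p : ℝ × ℝ, |p.1 - p.2| * g p.1 * f p.2 ∂((volume : Measure ℝ).prod volume))
        + ∫ p : ℝ × ℝ, |p.1 - p.2| * g p.1 * g p.2 ∂((volume : Measure ℝ).prod volume) := by
    have e : (fun p : ℝ × ℝ => |p.1 - p.2| * (f p.1 - g p.1) * (f p.2 - g p.2))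
        = fun p : ℝ × ℝ => ((|p.1 - p.2| * f p.1 * f p.2) - (|p.1 - p.2| * f p.1 * g p.2))
          - ((|p.1 - p.2| * g p.1 * f p.2) - (|p.1 - p.2| * g p.1 * g p.2)) := by
      funext p; ring
    have Ia : Integrable (fun p : ℝ × ℝ => |p.1 - p.2| * f p.1 * f p.2
        - |p.1 - p.2| * f p.1 * g p.2) ((volume : Measure ℝ).prod volume) := Iff_.sub Ifg
    have Ib : Integrable (fun p : ℝ × ℝ => |p.1 - p.2| * g p.1 * f p.2
        - |p.1 - p.2| * g p.1 * g p.2) ((volume : Measure ℝ).prod volume) := Igf.sub Igg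
    rw [e, integral_sub Ia Ib, integral_sub Iff_ Ifg, integral_sub Igf Igg]
    ring
  constructor
  · rw [Efg, Eff, Egg]
    rw [Edecomp, Eswap] at key
    linarith
  · rw [Edd]; exact key
end

section
/- For every a > 0 and every Lebesgue-integrable function k : ℝ → ℝ, the double integral ∬ (1 − |x−y|/a)·1_{[−a,a]}(x−y)·k(x)k(y) dx dy is nonnegative. -/
open MeasureTheory

noncomputable def triF (a u x : ℝ) : ℝ := if x ≤ u ∧ u ≤ x + a then 1 else 0

lemma triF_nonneg (a u x : ℝ) : 0 ≤ triF a u x := by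
  unfold triF; split <;> norm_num

lemma triF_le_one (a u x : ℝ) : triF a u x ≤ 1 := by
  unfold triF; split <;> norm_num

lemma triF_int (a : ℝ) (ha : 0 < a) (x y : ℝ) :
    ∫ u : ℝ, triF a u x * triF a u y
      = a * ((1 - |x - y| / a) * (if |x - y| ≤ a then (1:ℝ) else 0)) := by
  have h1 : ∀ u : ℝ, triF a u x * triF a u y
      = Set.indicator (Set.Icc (max x y) (min x y + a)) (fun _ => (1:ℝ)) u := by
    intro u
    unfold triF
    rw [Set.indicator_apply,
      show x ⊓ y + a = (x + a) ⊓ (y + a) from (min_add_add_right x y a).symm]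
    simp only [Set.mem_Icc, max_le_iff, le_min_iff]
    split_ifs <;> norm_num <;> tauto
  rw [show (fun u : ℝ => triF a u x * triF a u y) = _ from funext h1]
  rw [show (fun _ => (1:ℝ)) = (1 : ℝ → ℝ) from rfl,
    integral_indicator_one measurableSet_Icc, Real.volume_real_Icc]
  have habs : max x y - min x y = |x - y| := (max_sub_min_eq_abs x y).trans (abs_sub_comm y x)
  by_cases h : |x - y| ≤ a
  · rw [if_pos h, max_eq_left (by linarith), mul_one]
    field_simp
    linarith
  · rw [if_neg h, max_eq_right (by linarith), mul_zero, mul_zero]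

/-- Integrability of the basic kernel on the product space. -/
lemma triJ_integrable (a : ℝ) (ha : 0 < a) (k : ℝ → ℝ) (hkm : Measurable k)
    (hk : Integrable k (volume : Measure ℝ)) :
    Integrable (fun p : ℝ × ℝ => triF a p.2 p.1 * k p.1)
      ((volume : Measure ℝ).prod (volume : Measure ℝ)) := by
  have hSm : MeasurableSet {p : ℝ × ℝ | p.1 ≤ p.2 ∧ p.2 ≤ p.1 + a} :=
    (measurableSet_le measurable_fst measurable_snd).inter
      (measurableSet_le measurable_snd (measurable_fst.add_const a))
  have hmeas : Measurable (fun p : ℝ × ℝ => triF a p.2 p.1 * k p.1) := by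
    unfold triF
    exact (Measurable.ite hSm measurable_const measurable_const).mul
      (hkm.comp measurable_fst)
  rw [integrable_prod_iff hmeas.aestronglyMeasurable]
  constructor
  · refine Filter.Eventually.of_forall fun y => ?_
    have : (fun u : ℝ => triF a u y * k y)
        = Set.indicator (Set.Icc y (y + a)) (fun _ => k y) := by
      funext u
      simp [triF, Set.indicator_apply, Set.mem_Icc]
    rw [this]
    rw [integrable_indicator_iff measurableSet_Icc]
    exact integrableOn_const measure_Icc_lt_top.ne
  · have heq : ∀ y : ℝ, (∫ u : ℝ, ‖triF a u y * k y‖) = a * |k y| := by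
      intro y
      have h1 : ∀ u : ℝ, ‖triF a u y * k y‖
          = Set.indicator (Set.Icc y (y + a)) (fun _ => (1:ℝ)) u * |k y| := by
        intro u
        simp only [norm_mul, Real.norm_eq_abs, triF, Set.indicator_apply, Set.mem_Icc]
        split <;> simp
      rw [show (fun u : ℝ => ‖triF a u y * k y‖) = _ from funext h1,
        integral_mul_const, show (fun _ => (1:ℝ)) = (1 : ℝ → ℝ) from rfl,
        integral_indicator_one measurableSet_Icc, Real.volume_real_Icc]
      rw [max_eq_left (by linarith)]
      ring_nf
    rw [show (fun y : ℝ => ∫ u : ℝ, ‖triF a u y * k y‖) = fun y => a * |k y| from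
      funext heq]
    exact (hk.abs).const_mul a

theorem triangular_kernel_posdef_aux
    (a : ℝ) (ha : 0 < a) (k : ℝ → ℝ) (hkm : Measurable k)
    (hk : Integrable k (volume : Measure ℝ)) :
    0 ≤ ∫ x : ℝ, ∫ y : ℝ,
        (1 - |x - y| / a) * (if |x - y| ≤ a then (1 : ℝ) else 0) * k x * k y := by
  set g : ℝ → ℝ := fun u => ∫ y : ℝ, triF a u y * k y with hg
  have hJ := triJ_integrable a ha k hkm hk
  have hSm : MeasurableSet {p : ℝ × ℝ | p.1 ≤ p.2 ∧ p.2 ≤ p.1 + a} :=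
    (measurableSet_le measurable_fst measurable_snd).inter
      (measurableSet_le measurable_snd (measurable_fst.add_const a))
  have hJmeas : Measurable (fun p : ℝ × ℝ => triF a p.2 p.1 * k p.1) := by
    unfold triF
    exact (Measurable.ite hSm measurable_const measurable_const).mul
      (hkm.comp measurable_fst)
  -- measurability of g
  have hgm : StronglyMeasurable g := by
    have : StronglyMeasurable (fun p : ℝ × ℝ => triF a p.1 p.2 * k p.2) := by
      unfold triF
      exact ((Measurable.ite
        ((measurableSet_le measurable_snd measurable_fst).inter
          (measurableSet_le measurable_fst (measurable_snd.add_const a)))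
        measurable_const measurable_const).mul
        (hkm.comp measurable_snd)).stronglyMeasurable
    exact this.integral_prod_right'
  -- bound on g
  have hgb : ∀ u : ℝ, |g u| ≤ ∫ y : ℝ, |k y| := by
    intro u
    have hle : ‖g u‖ ≤ ∫ y : ℝ, ‖triF a u y * k y‖ := norm_integral_le_integral_norm _
    rw [Real.norm_eq_abs] at hle
    refine hle.trans (integral_mono_of_nonneg
      (Filter.Eventually.of_forall fun y => norm_nonneg _)
      hk.abs (Filter.Eventually.of_forall fun y => ?_))
    simp only [norm_mul, Real.norm_eq_abs]
    have h0 := triF_nonneg a u y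
    have h1 := triF_le_one a u y
    rw [abs_of_nonneg h0]
    nlinarith [abs_nonneg (k y)]
  -- step 1: pointwise identity for the kernel
  have hker : ∀ x y : ℝ,
      (1 - |x - y| / a) * (if |x - y| ≤ a then (1 : ℝ) else 0) * k x * k y
        = (1 / a) * ∫ u : ℝ, (triF a u x * k x) * (triF a u y * k y) := by
    intro x y
    have : (fun u : ℝ => (triF a u x * k x) * (triF a u y * k y))
        = fun u => (triF a u x * triF a u y) * (k x * k y) := by
      funext u; ring
    rw [this, integral_mul_const, triF_int a ha x y]
    field_simp
  -- inner swap, for each fixed x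
  have hswap1 : ∀ x : ℝ,
      (∫ y : ℝ, ∫ u : ℝ, (triF a u x * k x) * (triF a u y * k y))
        = ∫ u : ℝ, (triF a u x * k x) * g u := by
    intro x
    have hint : Integrable (Function.uncurry fun y u : ℝ =>
        (triF a u x * k x) * (triF a u y * k y))
        ((volume : Measure ℝ).prod volume) := by
      refine Integrable.mono (hJ.const_mul |k x|) ?_ ?_
      · refine Measurable.aestronglyMeasurable ?_
        have hm1 : Measurable (fun u : ℝ => triF a u x) := by
          unfold triF
          exact Measurable.ite
            ((measurableSet_le measurable_const measurable_id).inter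
              (measurableSet_le measurable_id measurable_const))
            measurable_const measurable_const
        exact ((hm1.comp measurable_snd).mul measurable_const).mul hJmeas
      · refine Filter.Eventually.of_forall fun p => ?_
        simp only [Function.uncurry, Real.norm_eq_abs, abs_mul, abs_abs]
        have h0 := triF_nonneg a p.2 x
        have h1 := triF_le_one a p.2 x
        have h2 : (0:ℝ) ≤ |triF a p.2 p.1| * |k p.1| :=
          mul_nonneg (abs_nonneg _) (abs_nonneg _)
        rw [abs_of_nonneg h0]
        nlinarith [abs_nonneg (k x), mul_nonneg (abs_nonneg (k x)) h2]
    calc (∫ y : ℝ, ∫ u : ℝ, (triF a u x * k x) * (triF a u y * k y))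
        = ∫ u : ℝ, ∫ y : ℝ, (triF a u x * k x) * (triF a u y * k y) :=
          integral_integral_swap hint
      _ = ∫ u : ℝ, (triF a u x * k x) * g u := by
          refine integral_congr_ae (Filter.Eventually.of_forall fun u => ?_)
          show (∫ y : ℝ, (triF a u x * k x) * (triF a u y * k y))
              = (triF a u x * k x) * g u
          rw [integral_const_mul, hg]
  -- outer swap
  have hswap2 :
      (∫ x : ℝ, ∫ u : ℝ, (triF a u x * k x) * g u)
        = ∫ u : ℝ, g u * g u := by
    have hint : Integrable (Function.uncurry fun x u : ℝ =>
        (triF a u x * k x) * g u) ((volume : Measure ℝ).prod volume) := by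
      refine Integrable.mono (hJ.const_mul (∫ y : ℝ, |k y|)) ?_ ?_
      · exact (hJmeas.mul (hgm.measurable.comp measurable_snd)).aestronglyMeasurable
      · refine Filter.Eventually.of_forall fun p => ?_
        simp only [Function.uncurry, Real.norm_eq_abs, abs_mul, abs_abs]
        have h1 := hgb p.2
        have h2 : (0:ℝ) ≤ ∫ y : ℝ, |k y| :=
          integral_nonneg fun y => abs_nonneg _
        rw [abs_of_nonneg h2]
        have h3 : (0:ℝ) ≤ |triF a p.2 p.1| * |k p.1| :=
          mul_nonneg (abs_nonneg _) (abs_nonneg _)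
        nlinarith [mul_nonneg (sub_nonneg.2 h1) h3]
    calc (∫ x : ℝ, ∫ u : ℝ, (triF a u x * k x) * g u)
        = ∫ u : ℝ, ∫ x : ℝ, (triF a u x * k x) * g u := integral_integral_swap hint
      _ = ∫ u : ℝ, g u * g u := by
          refine integral_congr_ae (Filter.Eventually.of_forall fun u => ?_)
          show (∫ x : ℝ, (triF a u x * k x) * g u) = g u * g u
          rw [integral_mul_const, hg]
  have hmain : (∫ x : ℝ, ∫ y : ℝ,
      (1 - |x - y| / a) * (if |x - y| ≤ a then (1 : ℝ) else 0) * k x * k y)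
      = (1 / a) * ∫ u : ℝ, g u * g u := by
    calc (∫ x : ℝ, ∫ y : ℝ,
        (1 - |x - y| / a) * (if |x - y| ≤ a then (1 : ℝ) else 0) * k x * k y)
        = ∫ x : ℝ, ∫ y : ℝ, (1 / a) *
            ∫ u : ℝ, (triF a u x * k x) * (triF a u y * k y) := by
          refine integral_congr_ae (Filter.Eventually.of_forall fun x => ?_)
          exact integral_congr_ae (Filter.Eventually.of_forall fun y => hker x y)
      _ = ∫ x : ℝ, (1 / a) *
            ∫ y : ℝ, ∫ u : ℝ, (triF a u x * k x) * (triF a u y * k y) := by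
          refine integral_congr_ae (Filter.Eventually.of_forall fun x => ?_)
          show (∫ y : ℝ, (1 / a) * ∫ u : ℝ, (triF a u x * k x) * (triF a u y * k y))
              = (1 / a) * ∫ y : ℝ, ∫ u : ℝ, (triF a u x * k x) * (triF a u y * k y)
          rw [integral_const_mul]
      _ = (1 / a) * ∫ x : ℝ,
            ∫ y : ℝ, ∫ u : ℝ, (triF a u x * k x) * (triF a u y * k y) := by
          rw [integral_const_mul]
      _ = (1 / a) * ∫ x : ℝ, ∫ u : ℝ, (triF a u x * k x) * g u := by
          congr 1
          exact integral_congr_ae (Filter.Eventually.of_forall fun x => hswap1 x)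
      _ = (1 / a) * ∫ u : ℝ, g u * g u := by rw [hswap2]
  rw [hmain]
  have : (0:ℝ) ≤ ∫ u : ℝ, g u * g u := integral_nonneg fun u => mul_self_nonneg _
  positivity

/-- Positive definiteness inequality coming from the triangular characteristic function:
for every `a > 0` and every integrable `k : ℝ → ℝ`, the double integral
`∬ (1 - |x-y|/a) 1_{|x-y| ≤ a} k(x) k(y) dx dy` is nonnegative. -/
theorem triangular_kernel_posdef
    (a : ℝ) (ha : 0 < a) (k : ℝ → ℝ) (hk : Integrable k (volume : Measure ℝ)) :
    0 ≤ ∫ x : ℝ, ∫ y : ℝ,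
        (1 - |x - y| / a) * (if |x - y| ≤ a then (1 : ℝ) else 0) * k x * k y := by
  obtain ⟨k', hk'm, hkk'⟩ := hk.aestronglyMeasurable
  have hk'int : Integrable k' (volume : Measure ℝ) := hk.congr hkk'
  have heq : (∫ x : ℝ, ∫ y : ℝ,
      (1 - |x - y| / a) * (if |x - y| ≤ a then (1 : ℝ) else 0) * k x * k y)
      = ∫ x : ℝ, ∫ y : ℝ,
      (1 - |x - y| / a) * (if |x - y| ≤ a then (1 : ℝ) else 0) * k' x * k' y := by
    refine integral_congr_ae ?_
    filter_upwards [hkk'] with x hx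
    refine integral_congr_ae ?_
    filter_upwards [hkk'] with y hy
    rw [hx, hy]
  rw [heq]
  exact triangular_kernel_posdef_aux a ha k' hk'm.measurable hk'int
end

section
/- Let X be a real random variable with E|X| < ∞ and P(X ≤ 0) = 1/2, let X' be an independent copy of X, and let c > 0. Let θ_F = E|X − X'|, θ_G = E|cX − cX'| = c·θ_F, and θ_{FG} = E|X − cX'|. Then min{θ_F, θ_G} ≤ θ_{FG} ≤ max{θ_F, θ_G}. -/
open MeasureTheory ProbabilityTheory Set
open scoped ENNReal

section Aux

/-- pointwise: for `x ≥ 0, y ≤ 0, c ≥ 1`. -/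
private lemma gini_pt1 {c x y : ℝ} (hc : 1 ≤ c) (hx : 0 ≤ x) (hy : y ≤ 0) :
    (c - 1) * x ≤ c * |x - y| - |x - c * y| := by
  have h0 : (0:ℝ) ≤ c := by linarith
  rw [abs_of_nonneg (by linarith), abs_of_nonneg (by nlinarith)]
  nlinarith

/-- pointwise: for `x ≥ 0, c ≥ 1`, general `y`. -/
private lemma gini_pt2 {c x y : ℝ} (hc : 1 ≤ c) (hx : 0 ≤ x) :
    -((c - 1) * x) ≤ c * |x - y| - |x - c * y| := by
  have h := abs_add_le (c * x - c * y) (x - c * x)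
  rw [show c * x - c * y + (x - c * x) = x - c * y by ring] at h
  rw [show c * x - c * y = c * (x - y) by ring, abs_mul,
    abs_of_nonneg (by linarith : (0:ℝ) ≤ c),
    abs_of_nonpos (by nlinarith : x - c * x ≤ 0)] at h
  linarith

private lemma gini_pt3 {c x y : ℝ} (hc : 1 ≤ c) (hx : x ≤ 0) (hy : 0 ≤ y) :
    (c - 1) * (-x) ≤ c * |x - y| - |x - c * y| := by
  have h := gini_pt1 hc (by linarith : (0:ℝ) ≤ -x) (by linarith : -y ≤ 0)
  rw [show -x - -y = -(x - y) by ring, show -x - c * -y = -(x - c * y) by ring,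
    abs_neg, abs_neg] at h
  exact h

private lemma gini_pt4 {c x y : ℝ} (hc : 1 ≤ c) (hx : x ≤ 0) :
    -((c - 1) * (-x)) ≤ c * |x - y| - |x - c * y| := by
  have h := gini_pt2 (y := -y) hc (by linarith : (0:ℝ) ≤ -x)
  rw [show -x - -y = -(x - y) by ring, show -x - c * -y = -(x - c * y) by ring,
    abs_neg, abs_neg] at h
  exact h

variable {μ : Measure ℝ} [IsProbabilityMeasure μ]

private lemma gini_half_lemma {f : ℝ → ℝ} (hf : Integrable f μ) {G : Set ℝ}
    (hG : MeasurableSet G) (hhalf : 1 / 2 ≤ (μ G).toReal) {b : ℝ} (hb : 0 ≤ b)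
    (h1 : ∀ y ∈ G, b ≤ f y) (h2 : ∀ y, -b ≤ f y) :
    0 ≤ ∫ y, f y ∂μ := by
  have hg : Integrable (fun y => G.indicator (fun _ => 2 * b) y + (-b)) μ :=
    ((integrable_const (2 * b)).indicator hG).add (integrable_const (-b))
  have hle : ∀ y, G.indicator (fun _ => 2 * b) y + (-b) ≤ f y := by
    intro y
    by_cases hy : y ∈ G
    · have := h1 y hy
      simp [Set.indicator_of_mem hy]
      linarith
    · have := h2 y
      simp [Set.indicator_of_notMem hy]
      linarith
  have hmono := integral_mono hg hf hle
  have hcalc : ∫ y, (G.indicator (fun _ => 2 * b) y + (-b)) ∂μ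
      = (μ G).toReal * (2 * b) + (-b) := by
    rw [integral_add (((integrable_const (2 * b)).indicator hG)) (integrable_const (-b)),
      integral_indicator_const _ hG, integral_const]
    simp [smul_eq_mul]
    exact Or.inl rfl
  rw [hcalc] at hmono
  nlinarith

private lemma gini_inner (h1 : Integrable (fun y : ℝ => y) μ) (hmed : μ (Iic 0) = 1 / 2)
    {c : ℝ} (hc : 1 ≤ c) (x : ℝ) :
    0 ≤ ∫ y, (c * |x - y| - |x - c * y|) ∂μ := by
  have hf : Integrable (fun y => c * |x - y| - |x - c * y|) μ :=
    ((((integrable_const x).sub h1).abs).const_mul c).sub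
      (((integrable_const x).sub (h1.const_mul c)).abs)
  have hIic : (μ (Iic 0)).toReal = 1 / 2 := by
    rw [hmed]
    simp [ENNReal.toReal_div]
  rcases le_or_gt 0 x with hx | hx
  · exact gini_half_lemma hf measurableSet_Iic (le_of_eq hIic.symm)
      (by nlinarith : (0:ℝ) ≤ (c - 1) * x)
      (fun y hy => gini_pt1 hc hx hy) (fun y => gini_pt2 hc hx)
  · have hIci : 1 / 2 ≤ (μ (Ici 0)).toReal := by
      have hdisj : Disjoint (Iio (0:ℝ)) (Ici 0) := Iio_disjoint_Ici le_rfl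
      have hsum : (μ (Iio 0)).toReal + (μ (Ici 0)).toReal = 1 := by
        rw [← ENNReal.toReal_add (measure_ne_top _ _) (measure_ne_top _ _),
          ← measure_union hdisj measurableSet_Ici, Iio_union_Ici, measure_univ,
          ENNReal.toReal_one]
      have hIio : (μ (Iio 0)).toReal ≤ 1 / 2 := by
        have h : μ (Iio 0) ≤ μ (Iic 0) := measure_mono Iio_subset_Iic_self
        rw [hmed] at h
        have h2 := ENNReal.toReal_mono (by norm_num : (1/2 : ℝ≥0∞) ≠ ⊤) h
        simpa [ENNReal.toReal_div] using h2
      linarith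
    exact gini_half_lemma hf measurableSet_Ici hIci
      (by nlinarith : (0:ℝ) ≤ (c - 1) * (-x))
      (fun y hy => gini_pt3 hc hx.le hy) (fun y => gini_pt4 hc hx.le)

private lemma gini_fst (h : Integrable (fun y : ℝ => y) μ) :
    Integrable (fun p : ℝ × ℝ => p.1) (μ.prod μ) := by
  have h1 : Integrable id (Measure.map Prod.fst (μ.prod μ)) := by
    rw [Measure.map_fst_prod, measure_univ, one_smul]
    exact h
  have := (integrable_map_measure aestronglyMeasurable_id
    measurable_fst.aemeasurable).mp h1
  simpa [Function.comp] using this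

private lemma gini_snd (h : Integrable (fun y : ℝ => y) μ) :
    Integrable (fun p : ℝ × ℝ => p.2) (μ.prod μ) := by
  have h1 : Integrable id (Measure.map Prod.snd (μ.prod μ)) := by
    rw [Measure.map_snd_prod, measure_univ, one_smul]
    exact h
  have := (integrable_map_measure aestronglyMeasurable_id
    measurable_snd.aemeasurable).mp h1
  simpa [Function.comp] using this

private lemma gini_intA (h : Integrable (fun y : ℝ => y) μ) (a : ℝ) :
    Integrable (fun p : ℝ × ℝ => |p.1 - a * p.2|) (μ.prod μ) :=
  ((gini_fst h).sub ((gini_snd h).const_mul a)).abs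

private lemma gini_intA' (h : Integrable (fun y : ℝ => y) μ) (a : ℝ) :
    Integrable (fun p : ℝ × ℝ => |a * p.1 - p.2|) (μ.prod μ) :=
  (((gini_fst h).const_mul a).sub (gini_snd h)).abs

private lemma gini_swap (a : ℝ) :
    ∫ p : ℝ × ℝ, |a * p.1 - p.2| ∂(μ.prod μ) = ∫ p : ℝ × ℝ, |p.1 - a * p.2| ∂(μ.prod μ) := by
  have h := integral_prod_swap (μ := μ) (ν := μ) (fun p : ℝ × ℝ => |p.1 - a * p.2|)
  simp only [Prod.swap] at h
  rw [← h]
  congr 1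
  funext p
  exact abs_sub_comm _ _

/-- Main upper-bound lemma for `c ≥ 1`. -/
private lemma gini_upper (h1 : Integrable (fun y : ℝ => y) μ) (hmed : μ (Iic 0) = 1 / 2)
    {c : ℝ} (hc : 1 ≤ c) :
    ∫ p : ℝ × ℝ, |p.1 - c * p.2| ∂(μ.prod μ)
      ≤ c * ∫ p : ℝ × ℝ, |p.1 - p.2| ∂(μ.prod μ) := by
  have hA : Integrable (fun p : ℝ × ℝ => |p.1 - p.2|) (μ.prod μ) := by
    simpa using gini_intA h1 1
  have hB := gini_intA h1 c
  have hψ : Integrable (fun p : ℝ × ℝ => c * |p.1 - p.2| - |p.1 - c * p.2|) (μ.prod μ) :=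
    (hA.const_mul c).sub hB
  have key : 0 ≤ ∫ p : ℝ × ℝ, (c * |p.1 - p.2| - |p.1 - c * p.2|) ∂(μ.prod μ) := by
    rw [integral_prod _ hψ]
    exact integral_nonneg fun x => gini_inner h1 hmed hc x
  rw [integral_sub (hA.const_mul c) hB, integral_const_mul] at key
  linarith

end Aux

/-- Proposition: for the Gini kernel `h(x,y) = |x-y|`, a median-centered `X ∼ F` and the
scaled distribution `G` of `cX`, the mixed parameter `θ_{FG}` lies between `θ_F` and `θ_G`. -/
theorem gini_mixed_parameter_between
    {Ω : Type*} [MeasurableSpace Ω] (P : Measure Ω) [IsProbabilityMeasure P]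
    (X X' : Ω → ℝ) (hX : Measurable X) (hX' : Measurable X')
    (hint : Integrable X P)
    (hid : Measure.map X P = Measure.map X' P)
    (hindep : IndepFun X X' P)
    (hmed : P {ω | X ω ≤ 0} = 1 / 2)
    (c : ℝ) (hc : 0 < c)
    (θF θG θFG : ℝ)
    (hθF : θF = ∫ ω, |X ω - X' ω| ∂P)
    (hθG : θG = c * θF)
    (hθFG : θFG = ∫ ω, |X ω - c * X' ω| ∂P) :
    min θF θG ≤ θFG ∧ θFG ≤ max θF θG := by
  set μ := Measure.map X P with hμ
  haveI : IsProbabilityMeasure μ := Measure.isProbabilityMeasure_map hX.aemeasurable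
  have h1 : Integrable (fun y : ℝ => y) μ := by
    have := (integrable_map_measure aestronglyMeasurable_id hX.aemeasurable).mpr
      (by simpa [Function.comp] using hint : Integrable (id ∘ X) P)
    exact this
  have hmedμ : μ (Iic 0) = 1 / 2 := by
    rw [hμ, Measure.map_apply hX measurableSet_Iic]
    exact hmed
  have hprod : Measure.map (fun ω => (X ω, X' ω)) P = μ.prod μ := by
    have h := (indepFun_iff_map_prod_eq_prod_map_map hX.aemeasurable hX'.aemeasurable).mp hindep
    rw [h, ← hid]
  have hEq : ∀ a : ℝ, ∫ ω, |X ω - a * X' ω| ∂P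
      = ∫ p : ℝ × ℝ, |p.1 - a * p.2| ∂(μ.prod μ) := by
    intro a
    rw [← hprod, integral_map (f := fun p : ℝ × ℝ => |p.1 - a * p.2|) (hX.prodMk hX').aemeasurable
      ((continuous_fst.sub (continuous_const.mul continuous_snd)).abs.aestronglyMeasurable)]
  have hEq1 : ∫ ω, |X ω - X' ω| ∂P = ∫ p : ℝ × ℝ, |p.1 - p.2| ∂(μ.prod μ) := by
    rw [← hprod, integral_map (f := fun p : ℝ × ℝ => |p.1 - p.2|) (hX.prodMk hX').aemeasurable
      ((continuous_fst.sub continuous_snd).abs.aestronglyMeasurable)]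
  set A := ∫ p : ℝ × ℝ, |p.1 - p.2| ∂(μ.prod μ) with hA
  set B := ∫ p : ℝ × ℝ, |p.1 - c * p.2| ∂(μ.prod μ) with hB
  have hθF' : θF = A := by rw [hθF, hEq1]
  have hθFG' : θFG = B := by rw [hθFG, hEq c]
  have hIA : Integrable (fun p : ℝ × ℝ => |p.1 - p.2|) (μ.prod μ) := by
    simpa using gini_intA h1 1
  -- lower bound
  have hlow : (1 + c) * A ≤ 2 * B := by
    have hpt : ∀ p : ℝ × ℝ, (1 + c) * |p.1 - p.2| ≤ |p.1 - c * p.2| + |c * p.1 - p.2| := by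
      rintro ⟨x, y⟩
      have h := abs_add_le (x - c * y) (c * x - y)
      rw [show x - c * y + (c * x - y) = (1 + c) * (x - y) by ring, abs_mul,
        abs_of_pos (by linarith : (0:ℝ) < 1 + c)] at h
      exact h
    have hmono := integral_mono (hIA.const_mul (1 + c))
      ((gini_intA h1 c).add (gini_intA' h1 c)) hpt
    simp only [Pi.add_apply] at hmono
    rw [integral_const_mul, integral_add (gini_intA h1 c) (gini_intA' h1 c),
      gini_swap c] at hmono
    rw [hA, hB]
    linarith
  constructor
  · have hmin : min θF θG ≤ (θF + θG) / 2 := by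
      rcases min_le_iff.mpr (Or.inl (le_refl θF)) with _
      have h1' := min_le_left θF θG
      have h2' := min_le_right θF θG
      linarith
    have : (θF + θG) / 2 ≤ θFG := by
      rw [hθF', hθFG', hθG, hθF']
      linarith
    linarith
  · rcases le_total 1 c with hc1 | hc1
    · have hBA : B ≤ c * A := gini_upper h1 hmedμ hc1
      have hθ : θFG ≤ θG := by rw [hθFG', hθG, hθF']; exact hBA
      exact hθ.trans (le_max_right _ _)
    · -- c ≤ 1 : reduce to 1/c ≥ 1
      have hcne : c ≠ 0 := ne_of_gt hc
      have hinv : 1 ≤ 1 / c := by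
        rw [le_div_iff₀ hc]; linarith
      have hkey := gini_upper h1 hmedμ hinv
      have hBalt : B = c * ∫ p : ℝ × ℝ, |p.1 - (1 / c) * p.2| ∂(μ.prod μ) := by
        rw [hB, ← gini_swap c, ← integral_const_mul]
        congr 1
        funext p
        rw [show c * p.1 - p.2 = c * (p.1 - (1 / c) * p.2) by field_simp, abs_mul,
          abs_of_pos hc]
      have hBA : B ≤ A := by
        rw [hBalt]
        calc c * ∫ p : ℝ × ℝ, |p.1 - (1 / c) * p.2| ∂(μ.prod μ)
            ≤ c * ((1 / c) * A) := mul_le_mul_of_nonneg_left hkey hc.le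
          _ = A := by field_simp
      have hθ : θFG ≤ θF := by rw [hθFG', hθF']; exact hBA
      exact hθ.trans (le_max_left _ _)
end
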